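/- arXiv:2511.13578 — 2 statements merged into one kernel-verified Lean document; each statement's English description precedes it below -/
import Mathlib

section
/- Let s, x ∈ A be free self-adjoint elements with s semicircular, and suppose x is not a scalar multiple of the unit (so that κ₂(x,x) = τ(x²) − τ(x)² ≠ 0, by faithfulness of τ). Then κ₄(s, i[s,x], i[s,x], s) = κ₂(s,s)² · κ₂(x,x) ≠ 0. In particular the mixed free cumulants of s and i[s,x] do not all vanish, so s and i[s,x] are not free. -/
open scoped BigOperators ComplexOrder

attribute [local instance] Classical.propDecidable

/-- A partition of `Fin m`, presented by its finset of blocks: every block is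
nonempty and every point lies in exactly one block. -/
def IsPartition {m : ℕ} (P : Finset (Finset (Fin m))) : Prop :=
  (∀ V ∈ P, V.Nonempty) ∧ ∀ i : Fin m, ∃! V : Finset (Fin m), V ∈ P ∧ i ∈ V

/-- A partition is non-crossing if there are no `i < j < k < l` with `i, k` in one
block and `j, l` in a different block. -/
def IsNonCrossing {m : ℕ} (P : Finset (Finset (Fin m))) : Prop :=
  ∀ V ∈ P, ∀ W ∈ P, ∀ i k : Fin m, i ∈ V → k ∈ V →
    ∀ j l : Fin m, j ∈ W → l ∈ W → i < j → j < k → k < l → V = W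

/-- The finset `NC(m)` of non-crossing partitions of `{1, …, m}` (as `Fin m`). -/
noncomputable def NCP (m : ℕ) : Finset (Finset (Finset (Fin m))) :=
  Finset.univ.filter fun P => IsPartition P ∧ IsNonCrossing P

/-- `κ_π[a₁, …, a_m]`: the product, over the blocks `V = {v₁ < ⋯ < v_r}` of `P`, of
`κ_r (a_{v₁}, …, a_{v_r})`. -/
noncomputable def cumulantPart {A : Type*} (κ : ∀ m : ℕ, (Fin m → A) → ℂ) {m : ℕ}
    (P : Finset (Finset (Fin m))) (a : Fin m → A) : ℂ :=
  ∏ V ∈ P, κ V.card fun i => a (V.orderEmbOfFin rfl i)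

/-- The moment–cumulant relations: `τ(a₁ ⋯ a_m) = ∑_{π ∈ NC(m)} κ_π[a₁, …, a_m]`.
These determine the free cumulant functionals `κ` of `τ`. -/
def MomentCumulant {A : Type*} [Ring A] [Algebra ℂ A] (τ : A →ₗ[ℂ] ℂ)
    (κ : ∀ m : ℕ, (Fin m → A) → ℂ) : Prop :=
  ∀ (m : ℕ) (a : Fin m → A), τ (List.ofFn a).prod = ∑ P ∈ NCP m, cumulantPart κ P a

/-- Free independence of `x` and `y`, via vanishing of mixed free cumulants: any
cumulant with at least two entries, each drawn from the unital *-subalgebra generated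
by `x` or from the one generated by `y`, with both subalgebras occurring, vanishes. -/
def FreePairOf {A : Type*} [Ring A] [StarRing A] [Algebra ℂ A] [StarModule ℂ A]
    (κ : ∀ m : ℕ, (Fin m → A) → ℂ) (x y : A) : Prop :=
  ∀ m : ℕ, 2 ≤ m → ∀ (a : Fin m → A) (c : Fin m → Bool),
    (∀ j, a j ∈ StarAlgebra.adjoin ℂ ({bif c j then x else y} : Set A)) →
    (∃ j, c j = true) → (∃ j, c j = false) → κ m a = 0

/-- `s` is semicircular w.r.t. the cumulant family `κ`: all cumulants of `s`
vanish except the second, which is positive. -/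
def IsSemicircular {A : Type*} (κ : ∀ m : ℕ, (Fin m → A) → ℂ) (s : A) : Prop :=
  (∀ m : ℕ, m ≠ 2 → κ m (fun _ => s) = 0) ∧ 0 < κ 2 (fun _ => s)


attribute [-instance] Classical.propDecidable

set_option maxRecDepth 8000

/-! ### Auxiliary infrastructure -/

lemma isPartition_iff {m : ℕ} (P : Finset (Finset (Fin m))) :
    IsPartition P ↔ (∀ V ∈ P, V.Nonempty) ∧
      ∀ i : Fin m, ∃ V : Finset (Fin m), (V ∈ P ∧ i ∈ V) ∧
        ∀ W : Finset (Fin m), (W ∈ P ∧ i ∈ W) → W = V := Iff.rfl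

lemma mem_NCP {m : ℕ} {P : Finset (Finset (Fin m))} :
    P ∈ NCP m ↔ IsPartition P ∧ IsNonCrossing P := by
  simp [NCP, Finset.mem_filter]

lemma partition_uniq {m : ℕ} {P : Finset (Finset (Fin m))} (hP : IsPartition P)
    {V W : Finset (Fin m)} {i : Fin m} (hV : V ∈ P) (hW : W ∈ P) (hiV : i ∈ V)
    (hiW : i ∈ W) : V = W := by
  obtain ⟨U, -, hU⟩ := hP.2 i
  rw [hU V ⟨hV, hiV⟩, hU W ⟨hW, hiW⟩]

lemma partition_eq {m : ℕ} {P : Finset (Finset (Fin m))} (hP : IsPartition P)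
    (L : Finset (Finset (Fin m))) (hL : ∀ V ∈ L, V ∈ P)
    (hcover : ∀ i : Fin m, ∃ V ∈ L, i ∈ V) : P = L := by
  apply Finset.Subset.antisymm
  · intro V hV
    obtain ⟨i, hi⟩ := hP.1 V hV
    obtain ⟨W, hWL, hiW⟩ := hcover i
    rwa [partition_uniq hP hV (hL W hWL) hi hiW]
  · exact hL

lemma exists_emb_eq {m : ℕ} (V : Finset (Fin m)) {i : Fin m} (hi : i ∈ V) :
    ∃ p : Fin V.card, V.orderEmbOfFin rfl p = i := by
  have h := Finset.range_orderEmbOfFin V rfl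
  have : i ∈ Set.range (V.orderEmbOfFin rfl) := by rw [h]; exact hi
  exact this

lemma kappa_cast {A : Type*} (κ : ∀ m : ℕ, (Fin m → A) → ℂ) {k l : ℕ} (h : k = l)
    (f : Fin k → A) (g : Fin l → A) (hfg : ∀ i : Fin k, f i = g (Fin.cast h i)) :
    κ k f = κ l g := by
  subst h; exact congrArg _ (funext fun i => hfg i)

lemma kappa_block {A : Type*} (κ : ∀ m : ℕ, (Fin m → A) → ℂ) {m k : ℕ} (a : Fin m → A)
    (V : Finset (Fin m)) (v : Fin k → Fin m) (hmono : StrictMono v)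
    (hV : V = Finset.image v Finset.univ) (g : Fin k → A) (hg : ∀ i, a (v i) = g i) :
    (κ V.card fun i => a (V.orderEmbOfFin rfl i)) = κ k g := by
  subst hV
  have hc : (Finset.image v Finset.univ).card = k := by
    rw [Finset.card_image_of_injective _ hmono.injective, Finset.card_univ, Fintype.card_fin]
  apply kappa_cast κ hc
  intro i
  have hu := Finset.orderEmbOfFin_unique (s := Finset.image v Finset.univ) rfl
    (f := fun j => v (Fin.cast hc j))
    (fun p => Finset.mem_image.2 ⟨_, Finset.mem_univ _, rfl⟩)
    (fun p q hpq => hmono hpq)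
  rw [← congrFun hu i]
  exact hg _

lemma pair_of_card_two {m : ℕ} {V : Finset (Fin m)} {i : Fin m} (hi : i ∈ V)
    (h2 : V.card = 2) : ∃ j, j ≠ i ∧ V = {i, j} := by
  obtain ⟨u, v, huv, hV⟩ := Finset.card_eq_two.1 h2
  subst hV
  rcases Finset.mem_insert.1 hi with h | h
  · exact ⟨v, fun hvu => huv (hvu ▸ h ▸ rfl), by rw [h]⟩
  · rw [Finset.mem_singleton] at h
    subst h
    exact ⟨u, huv, by rw [Finset.pair_comm]⟩

section MomCum

variable {A : Type*} [Ring A] [Algebra ℂ A] (τ : A →ₗ[ℂ] ℂ)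
  (κ : ∀ m : ℕ, (Fin m → A) → ℂ)

lemma NCP_one_eq : NCP 1 = ({{{0}}} : Finset (Finset (Finset (Fin 1)))) := by
  apply Finset.ext
  intro P
  constructor
  · intro hP
    obtain ⟨hpart, -⟩ := mem_NCP.1 hP
    obtain ⟨V, ⟨hVP, h0V⟩, -⟩ := hpart.2 0
    have hV : V = {0} := by
      apply Finset.Subset.antisymm
      · intro j hj
        rw [Subsingleton.elim j (0 : Fin 1)]
        exact Finset.mem_singleton_self _
      · intro j hj
        rw [Finset.mem_singleton] at hj
        rw [hj]; exact h0V
    have := partition_eq hpart {{0}} (by intro W hW; rw [Finset.mem_singleton] at hW; rw [hW, ← hV]; exact hVP)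
      (fun i => ⟨{0}, Finset.mem_singleton_self _, by rw [Subsingleton.elim i 0]; exact Finset.mem_singleton_self _⟩)
    simpa using this
  · intro hP
    rw [Finset.mem_singleton] at hP
    rw [hP, mem_NCP]
    exact ⟨(isPartition_iff _).2 (by decide), by unfold IsNonCrossing; decide⟩

lemma kappa_one (hκ : MomentCumulant τ κ) (g : Fin 1 → A) : κ 1 g = τ (g 0) := by
  have h := hκ 1 g
  rw [NCP_one_eq, Finset.sum_singleton] at h
  unfold cumulantPart at h
  rw [Finset.prod_singleton] at h
  rw [kappa_block κ (k := 1) g {0} ![0] (by rw [Fin.strictMono_iff_lt_succ]; decide) (by decide) g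
    (by intro i; fin_cases i <;> rfl)] at h
  rw [← h]
  congr 1
  simp [List.ofFn_succ]

lemma NCP_two_mem : ∀ P ∈ NCP 2, P = ({{0},{1}} : Finset (Finset (Fin 2))) ∨
    P = ({{0,1}} : Finset (Finset (Fin 2))) := by
  intro P hP
  obtain ⟨hpart, -⟩ := mem_NCP.1 hP
  obtain ⟨V0, ⟨hV0P, h0⟩, -⟩ := hpart.2 0
  by_cases h1 : (1 : Fin 2) ∈ V0
  · right
    have hV0 : V0 = {0, 1} := by
      apply Finset.Subset.antisymm
      · intro j hj; fin_cases j <;> decide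
      · intro j hj
        fin_cases hj
        · exact h0
        · exact h1
    exact partition_eq hpart {{0,1}}
      (by intro W hW; rw [Finset.mem_singleton] at hW; rw [hW, ← hV0]; exact hV0P)
      (by decide)
  · left
    obtain ⟨V1, ⟨hV1P, h1'⟩, -⟩ := hpart.2 1
    have hV0 : V0 = {0} := by
      apply Finset.Subset.antisymm
      · intro j hj
        fin_cases j
        · decide
        · exact absurd hj h1
      · intro j hj; rw [Finset.mem_singleton] at hj; rw [hj]; exact h0
    have hV1 : V1 = {1} := by
      apply Finset.Subset.antisymm
      · intro j hj
        fin_cases j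
        · exact absurd (partition_uniq hpart hV1P hV0P hj h0 ▸ h1') h1
        · decide
      · intro j hj; rw [Finset.mem_singleton] at hj; rw [hj]; exact h1'
    refine partition_eq hpart {{0},{1}} ?_ (by decide)
    intro W hW
    rcases Finset.mem_insert.1 hW with h | h
    · rw [h, ← hV0]; exact hV0P
    · rw [Finset.mem_singleton] at h; rw [h, ← hV1]; exact hV1P

lemma NCP_two_eq : NCP 2 = ({{{0},{1}}, {{0,1}}} : Finset (Finset (Finset (Fin 2)))) := by
  apply Finset.ext
  intro P
  constructor
  · intro hP
    rcases NCP_two_mem P hP with h | h <;> simp [h]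
  · intro hP
    rw [mem_NCP]
    rcases Finset.mem_insert.1 hP with h | h
    · rw [h]
      exact ⟨(isPartition_iff _).2 (by decide), by unfold IsNonCrossing; decide⟩
    · rw [Finset.mem_singleton] at h; rw [h]
      exact ⟨(isPartition_iff _).2 (by decide), by unfold IsNonCrossing; decide⟩

lemma kappa_two (hκ : MomentCumulant τ κ) (g : Fin 2 → A) :
    κ 2 g = τ (g 0 * g 1) - τ (g 0) * τ (g 1) := by
  have h := hκ 2 g
  rw [NCP_two_eq, Finset.sum_insert (by decide), Finset.sum_singleton] at h
  unfold cumulantPart at h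
  rw [Finset.prod_insert (by decide), Finset.prod_singleton, Finset.prod_singleton] at h
  rw [kappa_block κ (k := 1) g {(0 : Fin 2)} ![0] (by rw [Fin.strictMono_iff_lt_succ]; decide) (by decide) ![g 0]
    (by intro i; fin_cases i <;> rfl)] at h
  rw [kappa_block κ (k := 1) g {(1 : Fin 2)} ![1] (by rw [Fin.strictMono_iff_lt_succ]; decide) (by decide) ![g 1]
    (by intro i; fin_cases i <;> rfl)] at h
  rw [kappa_block κ (k := 2) g {0, 1} ![0, 1] (by rw [Fin.strictMono_iff_lt_succ]; decide) (by decide) g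
    (by intro i; fin_cases i <;> rfl)] at h
  rw [kappa_one τ κ hκ, kappa_one τ κ hκ] at h
  have hprod : (List.ofFn g).prod = g 0 * g 1 := by
    simp [List.ofFn_succ]
  rw [hprod] at h
  simp only [Matrix.cons_val_zero] at h
  linear_combination -h

end MomCum


section Words

variable {A : Type*} [Ring A] [StarRing A] [Algebra ℂ A] [StarModule ℂ A]
  (κ : ∀ m : ℕ, (Fin m → A) → ℂ) (s x : A)

lemma block_mixed_zero (hfree : FreePairOf κ s x) {m : ℕ} (a : Fin m → A)
    (col : Fin m → Bool) (ha : ∀ p, a p = bif col p then s else x)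
    (V : Finset (Fin m)) {i j : Fin m} (hi : i ∈ V) (hj : j ∈ V)
    (hij : col i ≠ col j) :
    κ V.card (fun p => a (V.orderEmbOfFin rfl p)) = 0 := by
  obtain ⟨pi, hpi⟩ := exists_emb_eq V hi
  obtain ⟨pj, hpj⟩ := exists_emb_eq V hj
  refine hfree V.card ?_ (fun p => a (V.orderEmbOfFin rfl p))
    (fun p => col (V.orderEmbOfFin rfl p)) ?_ ?_ ?_
  · exact Finset.one_lt_card.2 ⟨i, hi, j, hj, fun h => hij (h ▸ rfl)⟩
  · intro p
    show a (V.orderEmbOfFin rfl p) ∈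
      StarAlgebra.adjoin ℂ {bif col (V.orderEmbOfFin rfl p) then s else x}
    rw [ha]
    exact StarAlgebra.subset_adjoin (R := ℂ) _ (Set.mem_singleton _)
  · cases hci : col i
    · cases hcj : col j
      · exact absurd (hcj ▸ hci) hij
      · exact ⟨pj, show col (V.orderEmbOfFin rfl pj) = true by rw [hpj]; exact hcj⟩
    · exact ⟨pi, show col (V.orderEmbOfFin rfl pi) = true by rw [hpi]; exact hci⟩
  · cases hci : col i
    · exact ⟨pi, show col (V.orderEmbOfFin rfl pi) = false by rw [hpi]; exact hci⟩
    · cases hcj : col j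
      · exact ⟨pj, show col (V.orderEmbOfFin rfl pj) = false by rw [hpj]; exact hcj⟩
      · exact absurd (hcj ▸ hci) hij

lemma block_s_zero (hsc1 : ∀ m : ℕ, m ≠ 2 → κ m (fun _ => s) = 0) {m : ℕ}
    (a : Fin m → A) (col : Fin m → Bool) (ha : ∀ p, a p = bif col p then s else x)
    (V : Finset (Fin m)) (hpure : ∀ p ∈ V, col p = true) (hcard : V.card ≠ 2) :
    κ V.card (fun p => a (V.orderEmbOfFin rfl p)) = 0 := by
  have hfun : (fun p => a (V.orderEmbOfFin rfl p)) = fun _ => s := by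
    funext p
    rw [ha, hpure _ (Finset.orderEmbOfFin_mem V rfl p)]
    rfl
  rw [hfun]
  exact hsc1 _ hcard

lemma word_blocks (hfree : FreePairOf κ s x)
    (hsc1 : ∀ m : ℕ, m ≠ 2 → κ m (fun _ => s) = 0) {m : ℕ}
    {P : Finset (Finset (Fin m))} (a : Fin m → A) (col : Fin m → Bool)
    (ha : ∀ p, a p = bif col p then s else x)
    (hne : cumulantPart κ P a ≠ 0) :
    (∀ V ∈ P, ∀ i ∈ V, ∀ j ∈ V, col i = col j) ∧
      (∀ V ∈ P, ∀ i ∈ V, col i = true → V.card = 2) := by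
  have hfac := fun V hV => Finset.prod_ne_zero_iff.1 hne V hV
  have hpure : ∀ V ∈ P, ∀ i ∈ V, ∀ j ∈ V, col i = col j := by
    intro V hV i hi j hj
    by_contra hij
    exact hfac V hV (block_mixed_zero κ s x hfree a col ha V hi hj hij)
  refine ⟨hpure, ?_⟩
  intro V hV i hi hcoli
  by_contra hcard
  refine hfac V hV (block_s_zero κ s x hsc1 a col ha V ?_ hcard)
  intro p hp
  rw [hpure V hV p hp i hi, hcoli]

end Words


lemma spair {m : ℕ} {V : Finset (Fin m)} {i : Fin m} (hi : i ∈ V) (h2 : V.card = 2) :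
    ∃ j, j ≠ i ∧ j ∈ V ∧ V = {i, j} := by
  obtain ⟨j, hji, hV⟩ := pair_of_card_two hi h2
  exact ⟨j, hji, by rw [hV]; exact Finset.mem_insert_of_mem (Finset.mem_singleton_self _), hV⟩

lemma xblock_cases {m : ℕ} {P : Finset (Finset (Fin m))} (hP : IsPartition P)
    {Vu : Finset (Fin m)} {u v : Fin m}
    (hVuP : Vu ∈ P) (hu : u ∈ Vu) (hv' : v ∉ Vu) (hsub : Vu ⊆ {u, v}) :
    Vu = {u} ∧ ∀ Vv ∈ P, v ∈ Vv → Vv ⊆ {u, v} → Vv = {v} := by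
  constructor
  · apply Finset.Subset.antisymm
    · intro j hj
      rcases Finset.mem_insert.1 (hsub hj) with h | h
      · rw [h]; exact Finset.mem_singleton_self _
      · rw [Finset.mem_singleton] at h; subst h; exact absurd hj hv'
    · intro j hj; rw [Finset.mem_singleton] at hj; rw [hj]; exact hu
  · intro Vv hVvP hvVv hsubv
    apply Finset.Subset.antisymm
    · intro j hj
      rcases Finset.mem_insert.1 (hsubv hj) with h | h
      · subst h
        have := partition_uniq hP hVvP hVuP hj hu
        exact absurd (this ▸ hvVv) hv'
      · exact h
    · intro j hj; rw [Finset.mem_singleton] at hj; rw [hj]; exact hvVv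

section Words
variable {A : Type*} [Ring A] [StarRing A] [Algebra ℂ A] [StarModule ℂ A]
  (κ : ∀ m : ℕ, (Fin m → A) → ℂ) (s x : A)

lemma class_ssxx {P : Finset (Finset (Fin 4))} (hfree : FreePairOf κ s x)
    (hsc1 : ∀ m : ℕ, m ≠ 2 → κ m (fun _ => s) = 0)
    (hP : IsPartition P) (hNC : IsNonCrossing P)
    (hne : cumulantPart κ P ![s,s,x,x] ≠ 0) :
    P = ({{0,1},{2,3}} : Finset (Finset (Fin 4))) ∨
      P = ({{0,1},{2},{3}} : Finset (Finset (Fin 4))) := by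
  have ha : ∀ p, (![s,s,x,x] : Fin 4 → A) p =
      bif (![true,true,false,false] : Fin 4 → Bool) p then s else x := by
    intro p; fin_cases p <;> rfl
  obtain ⟨hpure, hstwo⟩ := word_blocks κ s x hfree hsc1 _ _ ha hne
  obtain ⟨V0, ⟨hV0P, h00⟩, -⟩ := hP.2 0
  have hV0card : V0.card = 2 := hstwo V0 hV0P 0 h00 rfl
  have hV0sub : V0 ⊆ {0,1} := by
    intro j hj
    have hcj := hpure V0 hV0P j hj 0 h00
    fin_cases j <;> revert hcj <;> decide
  have hV0 : V0 = {0,1} :=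
    Finset.eq_of_subset_of_card_le hV0sub (by rw [hV0card]; decide)
  obtain ⟨V2, ⟨hV2P, h22⟩, -⟩ := hP.2 2
  have hV2sub : V2 ⊆ {2,3} := by
    intro j hj
    have hcj := hpure V2 hV2P j hj 2 h22
    fin_cases j <;> revert hcj <;> decide
  by_cases h32 : (3 : Fin 4) ∈ V2
  · left
    have hV2 : V2 = {2,3} := by
      apply Finset.Subset.antisymm hV2sub
      intro j hj
      fin_cases hj
      · exact h22
      · exact h32
    refine partition_eq hP _ ?_ (by decide)
    intro W hW
    rcases Finset.mem_insert.1 hW with h | h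
    · rw [h, ← hV0]; exact hV0P
    · rw [Finset.mem_singleton] at h; rw [h, ← hV2]; exact hV2P
  · right
    have hV2 : V2 = {2} := by
      apply Finset.Subset.antisymm
      · intro j hj
        rcases Finset.mem_insert.1 (hV2sub hj) with h | h
        · rw [h]; exact Finset.mem_singleton_self _
        · rw [Finset.mem_singleton] at h; subst h; exact absurd hj h32
      · intro j hj; rw [Finset.mem_singleton] at hj; rw [hj]; exact h22
    obtain ⟨V3, ⟨hV3P, h33⟩, -⟩ := hP.2 3
    have hV3sub : V3 ⊆ {2,3} := by
      intro j hj
      have hcj := hpure V3 hV3P j hj 3 h33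
      fin_cases j <;> revert hcj <;> decide
    have hV3 : V3 = {3} := by
      apply Finset.Subset.antisymm
      · intro j hj
        rcases Finset.mem_insert.1 (hV3sub hj) with h | h
        · subst h
          have := partition_uniq hP hV3P hV2P hj h22
          rw [this, hV2] at h33
          exact absurd h33 (by decide)
        · exact h
      · intro j hj; rw [Finset.mem_singleton] at hj; rw [hj]; exact h33
    refine partition_eq hP _ ?_ (by decide)
    intro W hW
    rcases Finset.mem_insert.1 hW with h | h
    · rw [h, ← hV0]; exact hV0P
    · rcases Finset.mem_insert.1 h with h' | h'
      · rw [h', ← hV2]; exact hV2P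
      · rw [Finset.mem_singleton] at h'; rw [h', ← hV3]; exact hV3P

lemma class_sxsx {P : Finset (Finset (Fin 4))} (hfree : FreePairOf κ s x)
    (hsc1 : ∀ m : ℕ, m ≠ 2 → κ m (fun _ => s) = 0)
    (hP : IsPartition P) (hNC : IsNonCrossing P)
    (hne : cumulantPart κ P ![s,x,s,x] ≠ 0) :
    P = ({{0,2},{1},{3}} : Finset (Finset (Fin 4))) := by
  have ha : ∀ p, (![s,x,s,x] : Fin 4 → A) p =
      bif (![true,false,true,false] : Fin 4 → Bool) p then s else x := by
    intro p; fin_cases p <;> rfl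
  obtain ⟨hpure, hstwo⟩ := word_blocks κ s x hfree hsc1 _ _ ha hne
  obtain ⟨V0, ⟨hV0P, h00⟩, -⟩ := hP.2 0
  have hV0card : V0.card = 2 := hstwo V0 hV0P 0 h00 rfl
  have hV0sub : V0 ⊆ {0,2} := by
    intro j hj
    have hcj := hpure V0 hV0P j hj 0 h00
    fin_cases j <;> revert hcj <;> decide
  have hV0 : V0 = {0,2} :=
    Finset.eq_of_subset_of_card_le hV0sub (by rw [hV0card]; decide)
  obtain ⟨V1, ⟨hV1P, h11⟩, -⟩ := hP.2 1
  have hV1sub : V1 ⊆ {1,3} := by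
    intro j hj
    have hcj := hpure V1 hV1P j hj 1 h11
    fin_cases j <;> revert hcj <;> decide
  have h31 : (3 : Fin 4) ∉ V1 := by
    intro h31
    have := hNC V0 hV0P V1 hV1P 0 2 (hV0 ▸ (by decide)) (hV0 ▸ (by decide))
      1 3 h11 h31 (by decide) (by decide) (by decide)
    have h0V1 : (0 : Fin 4) ∈ V1 := this ▸ h00
    exact absurd (hV1sub h0V1) (by decide)
  have hV1 : V1 = {1} := by
    apply Finset.Subset.antisymm
    · intro j hj
      rcases Finset.mem_insert.1 (hV1sub hj) with h | h
      · rw [h]; exact Finset.mem_singleton_self _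
      · rw [Finset.mem_singleton] at h; subst h; exact absurd hj h31
    · intro j hj; rw [Finset.mem_singleton] at hj; rw [hj]; exact h11
  obtain ⟨V3, ⟨hV3P, h33⟩, -⟩ := hP.2 3
  have hV3sub : V3 ⊆ {1,3} := by
    intro j hj
    have hcj := hpure V3 hV3P j hj 3 h33
    fin_cases j <;> revert hcj <;> decide
  have hV3 : V3 = {3} := by
    apply Finset.Subset.antisymm
    · intro j hj
      rcases Finset.mem_insert.1 (hV3sub hj) with h | h
      · subst h
        have := partition_uniq hP hV3P hV1P hj h11
        rw [this, hV1] at h33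
        exact absurd h33 (by decide)
      · exact h
    · intro j hj; rw [Finset.mem_singleton] at hj; rw [hj]; exact h33
  refine partition_eq hP _ ?_ (by decide)
  intro W hW
  rcases Finset.mem_insert.1 hW with h | h
  · rw [h, ← hV0]; exact hV0P
  · rcases Finset.mem_insert.1 h with h' | h'
    · rw [h', ← hV1]; exact hV1P
    · rw [Finset.mem_singleton] at h'; rw [h', ← hV3]; exact hV3P
end Words

section Words
variable {A : Type*} [Ring A] [StarRing A] [Algebra ℂ A] [StarModule ℂ A]
  (κ : ∀ m : ℕ, (Fin m → A) → ℂ) (s x : A)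

lemma class_ssxxss {P : Finset (Finset (Fin 6))} (hfree : FreePairOf κ s x)
    (hsc1 : ∀ m : ℕ, m ≠ 2 → κ m (fun _ => s) = 0)
    (hP : IsPartition P) (hNC : IsNonCrossing P)
    (hne : cumulantPart κ P ![s,s,x,x,s,s] ≠ 0) :
    P = ({{0,1},{4,5},{2,3}} : Finset (Finset (Fin 6))) ∨
    P = ({{0,1},{4,5},{2},{3}} : Finset (Finset (Fin 6))) ∨
    P = ({{0,5},{1,4},{2,3}} : Finset (Finset (Fin 6))) ∨
    P = ({{0,5},{1,4},{2},{3}} : Finset (Finset (Fin 6))) := by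
  have ha : ∀ p, (![s,s,x,x,s,s] : Fin 6 → A) p =
      bif (![true,true,false,false,true,true] : Fin 6 → Bool) p then s else x := by
    intro p; fin_cases p <;> rfl
  obtain ⟨hpure, hstwo⟩ := word_blocks κ s x hfree hsc1 _ _ ha hne
  obtain ⟨V0, ⟨hV0P, h00⟩, -⟩ := hP.2 0
  obtain ⟨j, hj0, hjV0, hV0⟩ := spair h00 (hstwo V0 hV0P 0 h00 rfl)
  have hcj := hpure V0 hV0P j hjV0 0 h00
  -- x positions: 2 3
  obtain ⟨V2, ⟨hV2P, h22⟩, -⟩ := hP.2 2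
  have hV2sub : V2 ⊆ {2,3} := by
    intro p hp
    have hcp := hpure V2 hV2P p hp 2 h22
    fin_cases p <;> revert hcp <;> decide
  have hj' : j = 1 ∨ j = 4 ∨ j = 5 := by
    fin_cases j <;> revert hcj hj0 <;> decide
  rcases hj' with hj | hj | hj
  · -- V0 = {0,1}; second s-pair {4,5}
    subst hj
    obtain ⟨V4, ⟨hV4P, h44⟩, -⟩ := hP.2 4
    obtain ⟨k, hk4, hkV4, hV4⟩ := spair h44 (hstwo V4 hV4P 4 h44 rfl)
    have hck := hpure V4 hV4P k hkV4 4 h44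
    have hkV0 : k ∉ V0 := by
      intro hkV0
      have heq := partition_uniq hP hV4P hV0P hkV4 hkV0
      have : (4 : Fin 6) ∈ V0 := heq ▸ h44
      rw [hV0] at this
      exact absurd this (by decide)
    rw [hV0] at hkV0
    have hk : k = 5 := by
      fin_cases k <;> revert hck hk4 hkV0 <;> decide
    subst hk
    by_cases h32 : (3 : Fin 6) ∈ V2
    · left
      have hV2' : V2 = {2,3} := Finset.Subset.antisymm hV2sub
        (Finset.insert_subset h22 (Finset.singleton_subset_iff.2 h32))
      refine partition_eq hP _ ?_ (by decide)
      intro W hW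
      simp only [Finset.mem_insert, Finset.mem_singleton] at hW
      rcases hW with h | h | h
      · rw [h, ← hV0]; exact hV0P
      · rw [h, ← hV4]; exact hV4P
      · rw [h, ← hV2']; exact hV2P
    · right; left
      obtain ⟨V3, ⟨hV3P, h33⟩, -⟩ := hP.2 3
      have hV3sub : V3 ⊆ {2,3} := by
        intro p hp
        have hcp := hpure V3 hV3P p hp 3 h33
        fin_cases p <;> revert hcp <;> decide
      obtain ⟨hV2', hV3'⟩ := xblock_cases hP hV2P h22 h32 hV2sub
      have hV3' := hV3' V3 hV3P h33 hV3sub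
      refine partition_eq hP _ ?_ (by decide)
      intro W hW
      simp only [Finset.mem_insert, Finset.mem_singleton] at hW
      rcases hW with h | h | h | h
      · rw [h, ← hV0]; exact hV0P
      · rw [h, ← hV4]; exact hV4P
      · rw [h, ← hV2']; exact hV2P
      · rw [h, ← hV3']; exact hV3P
  · -- V0 = {0,4}: crossing with block of 1 = {1,5}
    exfalso
    subst hj
    obtain ⟨V1, ⟨hV1P, h11⟩, -⟩ := hP.2 1
    obtain ⟨k, hk1, hkV1, hV1⟩ := spair h11 (hstwo V1 hV1P 1 h11 rfl)
    have hck := hpure V1 hV1P k hkV1 1 h11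
    have hkV0 : k ∉ V0 := by
      intro hkV0
      have heq := partition_uniq hP hV1P hV0P hkV1 hkV0
      have : (1 : Fin 6) ∈ V0 := heq ▸ h11
      rw [hV0] at this
      exact absurd this (by decide)
    rw [hV0] at hkV0
    have hk : k = 5 := by
      fin_cases k <;> revert hck hk1 hkV0 <;> decide
    subst hk
    have hcross := hNC V0 hV0P V1 hV1P 0 4 h00 hjV0 1 5 h11 hkV1
      (by decide) (by decide) (by decide)
    have : (1 : Fin 6) ∈ V0 := hcross ▸ h11
    rw [hV0] at this
    exact absurd this (by decide)
  · -- V0 = {0,5}; second pair {1,4}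
    subst hj
    obtain ⟨V1, ⟨hV1P, h11⟩, -⟩ := hP.2 1
    obtain ⟨k, hk1, hkV1, hV1⟩ := spair h11 (hstwo V1 hV1P 1 h11 rfl)
    have hck := hpure V1 hV1P k hkV1 1 h11
    have hkV0 : k ∉ V0 := by
      intro hkV0
      have heq := partition_uniq hP hV1P hV0P hkV1 hkV0
      have : (1 : Fin 6) ∈ V0 := heq ▸ h11
      rw [hV0] at this
      exact absurd this (by decide)
    rw [hV0] at hkV0
    have hk : k = 4 := by
      fin_cases k <;> revert hck hk1 hkV0 <;> decide
    subst hk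
    by_cases h32 : (3 : Fin 6) ∈ V2
    · right; right; left
      have hV2' : V2 = {2,3} := Finset.Subset.antisymm hV2sub
        (Finset.insert_subset h22 (Finset.singleton_subset_iff.2 h32))
      refine partition_eq hP _ ?_ (by decide)
      intro W hW
      simp only [Finset.mem_insert, Finset.mem_singleton] at hW
      rcases hW with h | h | h
      · rw [h, ← hV0]; exact hV0P
      · rw [h, ← hV1]; exact hV1P
      · rw [h, ← hV2']; exact hV2P
    · right; right; right
      obtain ⟨V3, ⟨hV3P, h33⟩, -⟩ := hP.2 3
      have hV3sub : V3 ⊆ {2,3} := by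
        intro p hp
        have hcp := hpure V3 hV3P p hp 3 h33
        fin_cases p <;> revert hcp <;> decide
      obtain ⟨hV2', hV3'⟩ := xblock_cases hP hV2P h22 h32 hV2sub
      have hV3' := hV3' V3 hV3P h33 hV3sub
      refine partition_eq hP _ ?_ (by decide)
      intro W hW
      simp only [Finset.mem_insert, Finset.mem_singleton] at hW
      rcases hW with h | h | h | h
      · rw [h, ← hV0]; exact hV0P
      · rw [h, ← hV1]; exact hV1P
      · rw [h, ← hV2']; exact hV2P
      · rw [h, ← hV3']; exact hV3P
end Words


lemma disj_block {m : ℕ} {P : Finset (Finset (Fin m))} (hP : IsPartition P)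
    {V W : Finset (Fin m)} (hV : V ∈ P) (hW : W ∈ P) {w : Fin m} (hw : w ∈ W)
    (hwV : w ∉ V) : ∀ j ∈ W, j ∉ V :=
  fun _ hjW hjV => hwV (partition_uniq hP hW hV hjW hjV ▸ hw)

section Words
variable {A : Type*} [Ring A] [StarRing A] [Algebra ℂ A] [StarModule ℂ A]
  (κ : ∀ m : ℕ, (Fin m → A) → ℂ) (s x : A)

lemma class_sxsxss {P : Finset (Finset (Fin 6))} (hfree : FreePairOf κ s x)
    (hsc1 : ∀ m : ℕ, m ≠ 2 → κ m (fun _ => s) = 0)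
    (hP : IsPartition P) (hNC : IsNonCrossing P)
    (hne : cumulantPart κ P ![s,x,s,x,s,s] ≠ 0) :
    P = ({{0,2},{4,5},{1},{3}} : Finset (Finset (Fin 6))) ∨
    P = ({{0,5},{2,4},{1},{3}} : Finset (Finset (Fin 6))) := by
  have ha : ∀ p, (![s,x,s,x,s,s] : Fin 6 → A) p =
      bif (![true,false,true,false,true,true] : Fin 6 → Bool) p then s else x := by
    intro p; fin_cases p <;> rfl
  obtain ⟨hpure, hstwo⟩ := word_blocks κ s x hfree hsc1 _ _ ha hne
  obtain ⟨V0, ⟨hV0P, h00⟩, -⟩ := hP.2 0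
  obtain ⟨j, hj0, hjV0, hV0⟩ := spair h00 (hstwo V0 hV0P 0 h00 rfl)
  have hcj := hpure V0 hV0P j hjV0 0 h00
  obtain ⟨V1, ⟨hV1P, h11⟩, -⟩ := hP.2 1
  have hV1sub : V1 ⊆ {1,3} := by
    intro p hp
    have hcp := hpure V1 hV1P p hp 1 h11
    fin_cases p <;> revert hcp <;> decide
  obtain ⟨V3, ⟨hV3P, h33⟩, -⟩ := hP.2 3
  have hV3sub : V3 ⊆ {1,3} := by
    intro p hp
    have hcp := hpure V3 hV3P p hp 3 h33
    fin_cases p <;> revert hcp <;> decide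
  have hj' : j = 2 ∨ j = 4 ∨ j = 5 := by
    fin_cases j <;> revert hcj hj0 <;> decide
  rcases hj' with hj | hj | hj
  · -- V0 = {0,2}, then {4,5}
    left
    subst hj
    obtain ⟨V4, ⟨hV4P, h44⟩, -⟩ := hP.2 4
    obtain ⟨k, hk4, hkV4, hV4⟩ := spair h44 (hstwo V4 hV4P 4 h44 rfl)
    have hck := hpure V4 hV4P k hkV4 4 h44
    have hkV0 : k ∉ V0 :=
      disj_block hP hV0P hV4P h44 (show (4:Fin 6) ∉ V0 by rw [hV0]; decide) k hkV4
    rw [hV0] at hkV0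
    have hk : k = 5 := by fin_cases k <;> revert hck hk4 hkV0 <;> decide
    subst hk
    have h31 : (3 : Fin 6) ∉ V1 := by
      intro h31
      have hcross := hNC V0 hV0P V1 hV1P 0 2 h00 hjV0 1 3 h11 h31
        (by decide) (by decide) (by decide)
      have : (1 : Fin 6) ∈ V0 := hcross ▸ h11
      rw [hV0] at this
      exact absurd this (by decide)
    obtain ⟨hV1', hV3'⟩ := xblock_cases hP hV1P h11 h31 hV1sub
    have hV3' := hV3' V3 hV3P h33 hV3sub
    refine partition_eq hP _ ?_ (by decide)
    intro W hW
    simp only [Finset.mem_insert, Finset.mem_singleton] at hW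
    rcases hW with h | h | h | h
    · rw [h, ← hV0]; exact hV0P
    · rw [h, ← hV4]; exact hV4P
    · rw [h, ← hV1']; exact hV1P
    · rw [h, ← hV3']; exact hV3P
  · -- V0 = {0,4}: partner of 2 is 5: crossing
    exfalso
    subst hj
    obtain ⟨V2, ⟨hV2P, h22⟩, -⟩ := hP.2 2
    obtain ⟨k, hk2, hkV2, hV2⟩ := spair h22 (hstwo V2 hV2P 2 h22 rfl)
    have hck := hpure V2 hV2P k hkV2 2 h22
    have hkV0 : k ∉ V0 :=
      disj_block hP hV0P hV2P h22 (show (2:Fin 6) ∉ V0 by rw [hV0]; decide) k hkV2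
    rw [hV0] at hkV0
    have hk : k = 5 := by fin_cases k <;> revert hck hk2 hkV0 <;> decide
    subst hk
    have hcross := hNC V0 hV0P V2 hV2P 0 4 h00 hjV0 2 5 h22 hkV2
      (by decide) (by decide) (by decide)
    have : (2 : Fin 6) ∈ V0 := hcross ▸ h22
    rw [hV0] at this
    exact absurd this (by decide)
  · -- V0 = {0,5}; partner of 2 is 4
    right
    subst hj
    obtain ⟨V2, ⟨hV2P, h22⟩, -⟩ := hP.2 2
    obtain ⟨k, hk2, hkV2, hV2⟩ := spair h22 (hstwo V2 hV2P 2 h22 rfl)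
    have hck := hpure V2 hV2P k hkV2 2 h22
    have hkV0 : k ∉ V0 :=
      disj_block hP hV0P hV2P h22 (show (2:Fin 6) ∉ V0 by rw [hV0]; decide) k hkV2
    rw [hV0] at hkV0
    have hk : k = 4 := by fin_cases k <;> revert hck hk2 hkV0 <;> decide
    subst hk
    have h31 : (3 : Fin 6) ∉ V1 := by
      intro h31
      have hcross := hNC V1 hV1P V2 hV2P 1 3 h11 h31 2 4 h22 hkV2
        (by decide) (by decide) (by decide)
      have : (2 : Fin 6) ∈ V1 := hcross ▸ h22
      exact absurd (hV1sub this) (by decide)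
    obtain ⟨hV1', hV3'⟩ := xblock_cases hP hV1P h11 h31 hV1sub
    have hV3' := hV3' V3 hV3P h33 hV3sub
    refine partition_eq hP _ ?_ (by decide)
    intro W hW
    simp only [Finset.mem_insert, Finset.mem_singleton] at hW
    rcases hW with h | h | h | h
    · rw [h, ← hV0]; exact hV0P
    · rw [h, ← hV2]; exact hV2P
    · rw [h, ← hV1']; exact hV1P
    · rw [h, ← hV3']; exact hV3P

lemma class_sxssxs {P : Finset (Finset (Fin 6))} (hfree : FreePairOf κ s x)
    (hsc1 : ∀ m : ℕ, m ≠ 2 → κ m (fun _ => s) = 0)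
    (hP : IsPartition P) (hNC : IsNonCrossing P)
    (hne : cumulantPart κ P ![s,x,s,s,x,s] ≠ 0) :
    P = ({{0,2},{3,5},{1},{4}} : Finset (Finset (Fin 6))) ∨
    P = ({{0,5},{2,3},{1,4}} : Finset (Finset (Fin 6))) ∨
    P = ({{0,5},{2,3},{1},{4}} : Finset (Finset (Fin 6))) := by
  have ha : ∀ p, (![s,x,s,s,x,s] : Fin 6 → A) p =
      bif (![true,false,true,true,false,true] : Fin 6 → Bool) p then s else x := by
    intro p; fin_cases p <;> rfl
  obtain ⟨hpure, hstwo⟩ := word_blocks κ s x hfree hsc1 _ _ ha hne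
  obtain ⟨V0, ⟨hV0P, h00⟩, -⟩ := hP.2 0
  obtain ⟨j, hj0, hjV0, hV0⟩ := spair h00 (hstwo V0 hV0P 0 h00 rfl)
  have hcj := hpure V0 hV0P j hjV0 0 h00
  obtain ⟨V1, ⟨hV1P, h11⟩, -⟩ := hP.2 1
  have hV1sub : V1 ⊆ {1,4} := by
    intro p hp
    have hcp := hpure V1 hV1P p hp 1 h11
    fin_cases p <;> revert hcp <;> decide
  obtain ⟨V4, ⟨hV4P, h44⟩, -⟩ := hP.2 4
  have hV4sub : V4 ⊆ {1,4} := by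
    intro p hp
    have hcp := hpure V4 hV4P p hp 4 h44
    fin_cases p <;> revert hcp <;> decide
  have hj' : j = 2 ∨ j = 3 ∨ j = 5 := by
    fin_cases j <;> revert hcj hj0 <;> decide
  rcases hj' with hj | hj | hj
  · -- V0 = {0,2}; partner of 3 is 5
    left
    subst hj
    obtain ⟨V3, ⟨hV3P, h33⟩, -⟩ := hP.2 3
    obtain ⟨k, hk3, hkV3, hV3⟩ := spair h33 (hstwo V3 hV3P 3 h33 rfl)
    have hck := hpure V3 hV3P k hkV3 3 h33
    have hkV0 : k ∉ V0 :=
      disj_block hP hV0P hV3P h33 (show (3:Fin 6) ∉ V0 by rw [hV0]; decide) k hkV3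
    rw [hV0] at hkV0
    have hk : k = 5 := by fin_cases k <;> revert hck hk3 hkV0 <;> decide
    subst hk
    have h41 : (4 : Fin 6) ∉ V1 := by
      intro h41
      have hcross := hNC V1 hV1P V3 hV3P 1 4 h11 h41 3 5 h33 hkV3
        (by decide) (by decide) (by decide)
      have : (3 : Fin 6) ∈ V1 := hcross ▸ h33
      exact absurd (hV1sub this) (by decide)
    obtain ⟨hV1', hV4'⟩ := xblock_cases hP hV1P h11 h41 hV1sub
    have hV4' := hV4' V4 hV4P h44 hV4sub
    refine partition_eq hP _ ?_ (by decide)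
    intro W hW
    simp only [Finset.mem_insert, Finset.mem_singleton] at hW
    rcases hW with h | h | h | h
    · rw [h, ← hV0]; exact hV0P
    · rw [h, ← hV3]; exact hV3P
    · rw [h, ← hV1']; exact hV1P
    · rw [h, ← hV4']; exact hV4P
  · -- V0 = {0,3}: partner of 2 is 5: crossing
    exfalso
    subst hj
    obtain ⟨V2, ⟨hV2P, h22⟩, -⟩ := hP.2 2
    obtain ⟨k, hk2, hkV2, hV2⟩ := spair h22 (hstwo V2 hV2P 2 h22 rfl)
    have hck := hpure V2 hV2P k hkV2 2 h22
    have hkV0 : k ∉ V0 :=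
      disj_block hP hV0P hV2P h22 (show (2:Fin 6) ∉ V0 by rw [hV0]; decide) k hkV2
    rw [hV0] at hkV0
    have hk : k = 5 := by fin_cases k <;> revert hck hk2 hkV0 <;> decide
    subst hk
    have hcross := hNC V0 hV0P V2 hV2P 0 3 h00 hjV0 2 5 h22 hkV2
      (by decide) (by decide) (by decide)
    have : (2 : Fin 6) ∈ V0 := hcross ▸ h22
    rw [hV0] at this
    exact absurd this (by decide)
  · -- V0 = {0,5}; partner of 2 is 3
    subst hj
    obtain ⟨V2, ⟨hV2P, h22⟩, -⟩ := hP.2 2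
    obtain ⟨k, hk2, hkV2, hV2⟩ := spair h22 (hstwo V2 hV2P 2 h22 rfl)
    have hck := hpure V2 hV2P k hkV2 2 h22
    have hkV0 : k ∉ V0 :=
      disj_block hP hV0P hV2P h22 (show (2:Fin 6) ∉ V0 by rw [hV0]; decide) k hkV2
    rw [hV0] at hkV0
    have hk : k = 3 := by fin_cases k <;> revert hck hk2 hkV0 <;> decide
    subst hk
    by_cases h41 : (4 : Fin 6) ∈ V1
    · right; left
      have hV1' : V1 = {1,4} := Finset.Subset.antisymm hV1sub
        (Finset.insert_subset h11 (Finset.singleton_subset_iff.2 h41))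
      refine partition_eq hP _ ?_ (by decide)
      intro W hW
      simp only [Finset.mem_insert, Finset.mem_singleton] at hW
      rcases hW with h | h | h
      · rw [h, ← hV0]; exact hV0P
      · rw [h, ← hV2]; exact hV2P
      · rw [h, ← hV1']; exact hV1P
    · right; right
      obtain ⟨hV1', hV4'⟩ := xblock_cases hP hV1P h11 h41 hV1sub
      have hV4' := hV4' V4 hV4P h44 hV4sub
      refine partition_eq hP _ ?_ (by decide)
      intro W hW
      simp only [Finset.mem_insert, Finset.mem_singleton] at hW
      rcases hW with h | h | h | h
      · rw [h, ← hV0]; exact hV0P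
      · rw [h, ← hV2]; exact hV2P
      · rw [h, ← hV1']; exact hV1P
      · rw [h, ← hV4']; exact hV4P
end Words

lemma class_nc4 {P : Finset (Finset (Fin 4))} (hP : IsPartition P)
    (hNC : IsNonCrossing P) :
    P = ({{0,1,2,3}} : Finset (Finset (Fin 4))) ∨
    P = ({{0,1},{2,3}} : Finset (Finset (Fin 4))) ∨
    P = ({{0,3},{1,2}} : Finset (Finset (Fin 4))) ∨
    ∃ i : Fin 4, {i} ∈ P := by
  obtain ⟨V0, ⟨hV0P, h00⟩, -⟩ := hP.2 0
  by_cases h1 : (1 : Fin 4) ∈ V0 <;> by_cases h2 : (2 : Fin 4) ∈ V0 <;>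
    by_cases h3 : (3 : Fin 4) ∈ V0
  · -- full block
    left
    have hV0 : V0 = {0,1,2,3} := by
      apply Finset.Subset.antisymm
      · intro p hp; fin_cases p <;> decide
      · intro p hp; fin_cases hp <;> assumption
    refine partition_eq hP _ ?_ (by decide)
    intro W hW
    rw [Finset.mem_singleton] at hW
    rw [hW, ← hV0]; exact hV0P
  · -- 1,2 ∈ V0, 3 ∉: {3} singleton
    right; right; right
    obtain ⟨V3, ⟨hV3P, h33⟩, -⟩ := hP.2 3
    have hd := disj_block hP hV0P hV3P h33 h3
    have hV3 : V3 = {3} := by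
      apply Finset.Subset.antisymm
      · intro p hp
        have := hd p hp
        fin_cases p <;> simp_all <;> decide
      · intro p hp; rw [Finset.mem_singleton] at hp; rw [hp]; exact h33
    exact ⟨3, hV3 ▸ hV3P⟩
  · -- 1,3 ∈ V0, 2 ∉: {2} singleton
    right; right; right
    obtain ⟨V2, ⟨hV2P, h22⟩, -⟩ := hP.2 2
    have hd := disj_block hP hV0P hV2P h22 h2
    have hV2 : V2 = {2} := by
      apply Finset.Subset.antisymm
      · intro p hp
        have := hd p hp
        fin_cases p <;> simp_all <;> decide
      · intro p hp; rw [Finset.mem_singleton] at hp; rw [hp]; exact h22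
    exact ⟨2, hV2 ▸ hV2P⟩
  · -- V0 = {0,1}
    have hV0 : V0 = {0,1} := by
      apply Finset.Subset.antisymm
      · intro p hp
        fin_cases p
        · decide
        · decide
        · exact absurd hp h2
        · exact absurd hp h3
      · intro p hp; fin_cases hp <;> assumption
    obtain ⟨V2, ⟨hV2P, h22⟩, -⟩ := hP.2 2
    have hd := disj_block hP hV0P hV2P h22 h2
    have hV2sub : V2 ⊆ {2,3} := by
      intro p hp
      have := hd p hp
      rw [hV0] at this
      fin_cases p <;> simp_all <;> decide
    by_cases h32 : (3 : Fin 4) ∈ V2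
    · right; left
      have hV2' : V2 = {2,3} := Finset.Subset.antisymm hV2sub
        (Finset.insert_subset h22 (Finset.singleton_subset_iff.2 h32))
      refine partition_eq hP _ ?_ (by decide)
      intro W hW
      simp only [Finset.mem_insert, Finset.mem_singleton] at hW
      rcases hW with h | h
      · rw [h, ← hV0]; exact hV0P
      · rw [h, ← hV2']; exact hV2P
    · right; right; right
      obtain ⟨hV2', -⟩ := xblock_cases hP hV2P h22 h32 hV2sub
      exact ⟨2, hV2' ▸ hV2P⟩
  · -- 2,3 ∈ V0, 1 ∉: {1} singleton
    right; right; right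
    obtain ⟨V1, ⟨hV1P, h11⟩, -⟩ := hP.2 1
    have hd := disj_block hP hV0P hV1P h11 h1
    have hV1 : V1 = {1} := by
      apply Finset.Subset.antisymm
      · intro p hp
        have := hd p hp
        fin_cases p <;> simp_all <;> decide
      · intro p hp; rw [Finset.mem_singleton] at hp; rw [hp]; exact h11
    exact ⟨1, hV1 ▸ hV1P⟩
  · -- V0 = {0,2}: {1} singleton by non-crossing
    right; right; right
    have hV0 : V0 = {0,2} := by
      apply Finset.Subset.antisymm
      · intro p hp
        fin_cases p
        · decide
        · exact absurd hp h1
        · decide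
        · exact absurd hp h3
      · intro p hp; fin_cases hp <;> assumption
    obtain ⟨V1, ⟨hV1P, h11⟩, -⟩ := hP.2 1
    have hd := disj_block hP hV0P hV1P h11 h1
    have hV1sub : V1 ⊆ {1,3} := by
      intro p hp
      have := hd p hp
      rw [hV0] at this
      fin_cases p <;> simp_all <;> decide
    have h31 : (3 : Fin 4) ∉ V1 := by
      intro h31
      have hcross := hNC V0 hV0P V1 hV1P 0 2 h00 h2 1 3 h11 h31
        (by decide) (by decide) (by decide)
      have : (1 : Fin 4) ∈ V0 := hcross ▸ h11
      exact absurd this h1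
    obtain ⟨hV1', -⟩ := xblock_cases hP hV1P h11 h31 hV1sub
    exact ⟨1, hV1' ▸ hV1P⟩
  · -- V0 = {0,3}
    have hV0 : V0 = {0,3} := by
      apply Finset.Subset.antisymm
      · intro p hp
        fin_cases p
        · decide
        · exact absurd hp h1
        · exact absurd hp h2
        · decide
      · intro p hp; fin_cases hp <;> assumption
    obtain ⟨V1, ⟨hV1P, h11⟩, -⟩ := hP.2 1
    have hd := disj_block hP hV0P hV1P h11 h1
    have hV1sub : V1 ⊆ {1,2} := by
      intro p hp
      have := hd p hp
      rw [hV0] at this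
      fin_cases p <;> simp_all <;> decide
    by_cases h21 : (2 : Fin 4) ∈ V1
    · right; right; left
      have hV1' : V1 = {1,2} := Finset.Subset.antisymm hV1sub
        (Finset.insert_subset h11 (Finset.singleton_subset_iff.2 h21))
      refine partition_eq hP _ ?_ (by decide)
      intro W hW
      simp only [Finset.mem_insert, Finset.mem_singleton] at hW
      rcases hW with h | h
      · rw [h, ← hV0]; exact hV0P
      · rw [h, ← hV1']; exact hV1P
    · right; right; right
      obtain ⟨hV1', -⟩ := xblock_cases hP hV1P h11 h21 hV1sub
      exact ⟨1, hV1' ▸ hV1P⟩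
  · -- V0 = {0}
    right; right; right
    have hV0 : V0 = {0} := by
      apply Finset.Subset.antisymm
      · intro p hp
        fin_cases p
        · decide
        · exact absurd hp h1
        · exact absurd hp h2
        · exact absurd hp h3
      · intro p hp; rw [Finset.mem_singleton] at hp; rw [hp]; exact h00
    exact ⟨0, hV0 ▸ hV0P⟩


section Moments
variable {A : Type*} [Ring A] [StarRing A] [Algebra ℂ A] [StarModule ℂ A]
  (τ : A →ₗ[ℂ] ℂ) (κ : ∀ m : ℕ, (Fin m → A) → ℂ) (s x : A)

/-- helper to prove membership of explicit partitions in NCP m -/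
lemma mem_NCP_of {m : ℕ} {P : Finset (Finset (Fin m))}
    (h1 : (∀ V ∈ P, V.Nonempty) ∧
      ∀ i : Fin m, ∃ V : Finset (Fin m), (V ∈ P ∧ i ∈ V) ∧
        ∀ W : Finset (Fin m), (W ∈ P ∧ i ∈ W) → W = V)
    (h2 : IsNonCrossing P) : P ∈ NCP m :=
  mem_NCP.2 ⟨(isPartition_iff _).2 h1, h2⟩

lemma mom_ssxx (hκ : MomentCumulant τ κ) (hfree : FreePairOf κ s x)
    (hsc1 : ∀ m : ℕ, m ≠ 2 → κ m (fun _ => s) = 0) :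
    τ (s*(s*(x*x))) = κ 2 (fun _ => s) * κ 2 ![x,x] +
      κ 2 (fun _ => s) * (τ x * τ x) := by
  have h := hκ 4 ![s,s,x,x]
  rw [show (List.ofFn ![s,s,x,x]).prod = s*(s*(x*x)) by simp [List.ofFn_succ]] at h
  rw [← Finset.sum_subset
    (show ({{{0,1},{2,3}}, {{0,1},{2},{3}}} : Finset (Finset (Finset (Fin 4)))) ⊆ NCP 4 by
      intro P hP
      simp only [Finset.mem_insert, Finset.mem_singleton] at hP
      rcases hP with h | h <;> rw [h] <;>
        exact mem_NCP_of (by decide) (by unfold IsNonCrossing; decide))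
    (by
      intro P hPN hPL
      by_contra hne
      simp only [Finset.mem_insert, Finset.mem_singleton] at hPL
      rcases class_ssxx κ s x hfree hsc1 (mem_NCP.1 hPN).1 (mem_NCP.1 hPN).2 hne with h | h <;>
        exact hPL (by tauto))] at h
  rw [Finset.sum_insert (by decide), Finset.sum_singleton] at h
  unfold cumulantPart at h
  rw [Finset.prod_insert (by decide), Finset.prod_singleton,
      Finset.prod_insert (by decide), Finset.prod_insert (by decide),
      Finset.prod_singleton] at h
  rw [kappa_block κ (k := 2) ![s,s,x,x] {0,1} ![0,1]
        (by rw [Fin.strictMono_iff_lt_succ]; decide) (by decide) (fun _ => s)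
        (by intro i; fin_cases i <;> rfl),
      kappa_block κ (k := 2) ![s,s,x,x] {2,3} ![2,3]
        (by rw [Fin.strictMono_iff_lt_succ]; decide) (by decide) ![x,x]
        (by intro i; fin_cases i <;> rfl),
      kappa_block κ (k := 1) ![s,s,x,x] {2} ![2]
        (by rw [Fin.strictMono_iff_lt_succ]; decide) (by decide) ![x]
        (by intro i; fin_cases i <;> rfl),
      kappa_block κ (k := 1) ![s,s,x,x] {3} ![3]
        (by rw [Fin.strictMono_iff_lt_succ]; decide) (by decide) ![x]
        (by intro i; fin_cases i <;> rfl),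
      kappa_one τ κ hκ] at h
  simp only [Matrix.cons_val_zero] at h
  linear_combination h

end Moments

section Moments2
variable {A : Type*} [Ring A] [StarRing A] [Algebra ℂ A] [StarModule ℂ A]
  (τ : A →ₗ[ℂ] ℂ) (κ : ∀ m : ℕ, (Fin m → A) → ℂ) (s x : A)

lemma mom_sxsx (hκ : MomentCumulant τ κ) (hfree : FreePairOf κ s x)
    (hsc1 : ∀ m : ℕ, m ≠ 2 → κ m (fun _ => s) = 0) :
    τ (s*(x*(s*x))) = κ 2 (fun _ => s) * (τ x * τ x) := by
  have h := hκ 4 ![s,x,s,x]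
  rw [show (List.ofFn ![s,x,s,x]).prod = s*(x*(s*x)) by simp [List.ofFn_succ]] at h
  rw [← Finset.sum_subset
    (show ({{{0,2},{1},{3}}} : Finset (Finset (Finset (Fin 4)))) ⊆ NCP 4 by
      intro P hP
      rw [Finset.mem_singleton] at hP
      rw [hP]
      exact mem_NCP_of (by decide) (by unfold IsNonCrossing; decide))
    (by
      intro P hPN hPL
      by_contra hne
      rw [Finset.mem_singleton] at hPL
      exact hPL (class_sxsx κ s x hfree hsc1 (mem_NCP.1 hPN).1 (mem_NCP.1 hPN).2 hne))] at h
  rw [Finset.sum_singleton] at h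
  unfold cumulantPart at h
  rw [Finset.prod_insert (by decide), Finset.prod_insert (by decide),
      Finset.prod_singleton] at h
  rw [kappa_block κ (k := 2) ![s,x,s,x] {0,2} ![0,2]
        (by rw [Fin.strictMono_iff_lt_succ]; decide) (by decide) (fun _ => s)
        (by intro i; fin_cases i <;> rfl),
      kappa_block κ (k := 1) ![s,x,s,x] {1} ![1]
        (by rw [Fin.strictMono_iff_lt_succ]; decide) (by decide) ![x]
        (by intro i; fin_cases i <;> rfl),
      kappa_block κ (k := 1) ![s,x,s,x] {3} ![3]
        (by rw [Fin.strictMono_iff_lt_succ]; decide) (by decide) ![x]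
        (by intro i; fin_cases i <;> rfl),
      kappa_one τ κ hκ] at h
  simp only [Matrix.cons_val_zero] at h
  linear_combination h

lemma mom_sxsxss (hκ : MomentCumulant τ κ) (hfree : FreePairOf κ s x)
    (hsc1 : ∀ m : ℕ, m ≠ 2 → κ m (fun _ => s) = 0) :
    τ (s*(x*(s*(x*(s*s))))) = 2 * κ 2 (fun _ => s)^2 * (τ x)^2 := by
  have h := hκ 6 ![s,x,s,x,s,s]
  rw [show (List.ofFn ![s,x,s,x,s,s]).prod = s*(x*(s*(x*(s*s)))) by
    simp [List.ofFn_succ]] at h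
  rw [← Finset.sum_subset
    (show ({{{0,2},{4,5},{1},{3}}, {{0,5},{2,4},{1},{3}}} :
        Finset (Finset (Finset (Fin 6)))) ⊆ NCP 6 by
      intro P hP
      simp only [Finset.mem_insert, Finset.mem_singleton] at hP
      rcases hP with h | h <;> rw [h] <;>
        exact mem_NCP_of (by decide) (by unfold IsNonCrossing; decide))
    (by
      intro P hPN hPL
      by_contra hne
      simp only [Finset.mem_insert, Finset.mem_singleton] at hPL
      rcases class_sxsxss κ s x hfree hsc1 (mem_NCP.1 hPN).1 (mem_NCP.1 hPN).2 hne with h | h <;>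
        exact hPL (by tauto))] at h
  rw [Finset.sum_insert (by decide), Finset.sum_singleton] at h
  unfold cumulantPart at h
  rw [Finset.prod_insert (by decide), Finset.prod_insert (by decide),
      Finset.prod_insert (by decide), Finset.prod_singleton,
      Finset.prod_insert (by decide), Finset.prod_insert (by decide),
      Finset.prod_insert (by decide), Finset.prod_singleton] at h
  rw [kappa_block κ (k := 2) ![s,x,s,x,s,s] {0,2} ![0,2]
        (by rw [Fin.strictMono_iff_lt_succ]; decide) (by decide) (fun _ => s)
        (by intro i; fin_cases i <;> rfl),
      kappa_block κ (k := 2) ![s,x,s,x,s,s] {4,5} ![4,5]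
        (by rw [Fin.strictMono_iff_lt_succ]; decide) (by decide) (fun _ => s)
        (by intro i; fin_cases i <;> rfl),
      kappa_block κ (k := 2) ![s,x,s,x,s,s] {0,5} ![0,5]
        (by rw [Fin.strictMono_iff_lt_succ]; decide) (by decide) (fun _ => s)
        (by intro i; fin_cases i <;> rfl),
      kappa_block κ (k := 2) ![s,x,s,x,s,s] {2,4} ![2,4]
        (by rw [Fin.strictMono_iff_lt_succ]; decide) (by decide) (fun _ => s)
        (by intro i; fin_cases i <;> rfl),
      kappa_block κ (k := 1) ![s,x,s,x,s,s] {1} ![1]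
        (by rw [Fin.strictMono_iff_lt_succ]; decide) (by decide) ![x]
        (by intro i; fin_cases i <;> rfl),
      kappa_block κ (k := 1) ![s,x,s,x,s,s] {3} ![3]
        (by rw [Fin.strictMono_iff_lt_succ]; decide) (by decide) ![x]
        (by intro i; fin_cases i <;> rfl),
      kappa_one τ κ hκ] at h
  simp only [Matrix.cons_val_zero] at h
  linear_combination h

lemma mom_ssxxss (hκ : MomentCumulant τ κ) (hfree : FreePairOf κ s x)
    (hsc1 : ∀ m : ℕ, m ≠ 2 → κ m (fun _ => s) = 0) :
    τ (s*(s*(x*(x*(s*s))))) = 2 * κ 2 (fun _ => s)^2 * κ 2 ![x,x] +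
      2 * κ 2 (fun _ => s)^2 * (τ x)^2 := by
  have h := hκ 6 ![s,s,x,x,s,s]
  rw [show (List.ofFn ![s,s,x,x,s,s]).prod = s*(s*(x*(x*(s*s)))) by
    simp [List.ofFn_succ]] at h
  rw [← Finset.sum_subset
    (show ({{{0,1},{4,5},{2,3}}, {{0,1},{4,5},{2},{3}},
        {{0,5},{1,4},{2,3}}, {{0,5},{1,4},{2},{3}}} :
        Finset (Finset (Finset (Fin 6)))) ⊆ NCP 6 by
      intro P hP
      simp only [Finset.mem_insert, Finset.mem_singleton] at hP
      rcases hP with h | h | h | h <;> rw [h] <;>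
        exact mem_NCP_of (by decide) (by unfold IsNonCrossing; decide))
    (by
      intro P hPN hPL
      by_contra hne
      simp only [Finset.mem_insert, Finset.mem_singleton] at hPL
      rcases class_ssxxss κ s x hfree hsc1 (mem_NCP.1 hPN).1 (mem_NCP.1 hPN).2 hne with
        h | h | h | h <;> exact hPL (by tauto))] at h
  rw [Finset.sum_insert (by decide), Finset.sum_insert (by decide),
      Finset.sum_insert (by decide), Finset.sum_singleton] at h
  unfold cumulantPart at h
  rw [Finset.prod_insert (by decide), Finset.prod_insert (by decide),
      Finset.prod_singleton,
      Finset.prod_insert (by decide), Finset.prod_insert (by decide),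
      Finset.prod_insert (by decide), Finset.prod_singleton,
      Finset.prod_insert (by decide), Finset.prod_insert (by decide),
      Finset.prod_singleton,
      Finset.prod_insert (by decide), Finset.prod_insert (by decide),
      Finset.prod_insert (by decide), Finset.prod_singleton] at h
  rw [kappa_block κ (k := 2) ![s,s,x,x,s,s] {0,1} ![0,1]
        (by rw [Fin.strictMono_iff_lt_succ]; decide) (by decide) (fun _ => s)
        (by intro i; fin_cases i <;> rfl),
      kappa_block κ (k := 2) ![s,s,x,x,s,s] {4,5} ![4,5]
        (by rw [Fin.strictMono_iff_lt_succ]; decide) (by decide) (fun _ => s)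
        (by intro i; fin_cases i <;> rfl),
      kappa_block κ (k := 2) ![s,s,x,x,s,s] {0,5} ![0,5]
        (by rw [Fin.strictMono_iff_lt_succ]; decide) (by decide) (fun _ => s)
        (by intro i; fin_cases i <;> rfl),
      kappa_block κ (k := 2) ![s,s,x,x,s,s] {1,4} ![1,4]
        (by rw [Fin.strictMono_iff_lt_succ]; decide) (by decide) (fun _ => s)
        (by intro i; fin_cases i <;> rfl),
      kappa_block κ (k := 2) ![s,s,x,x,s,s] {2,3} ![2,3]
        (by rw [Fin.strictMono_iff_lt_succ]; decide) (by decide) ![x,x]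
        (by intro i; fin_cases i <;> rfl),
      kappa_block κ (k := 1) ![s,s,x,x,s,s] {2} ![2]
        (by rw [Fin.strictMono_iff_lt_succ]; decide) (by decide) ![x]
        (by intro i; fin_cases i <;> rfl),
      kappa_block κ (k := 1) ![s,s,x,x,s,s] {3} ![3]
        (by rw [Fin.strictMono_iff_lt_succ]; decide) (by decide) ![x]
        (by intro i; fin_cases i <;> rfl),
      kappa_one τ κ hκ] at h
  simp only [Matrix.cons_val_zero] at h
  linear_combination h

lemma mom_sxssxs (hκ : MomentCumulant τ κ) (hfree : FreePairOf κ s x)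
    (hsc1 : ∀ m : ℕ, m ≠ 2 → κ m (fun _ => s) = 0) :
    τ (s*(x*(s*(s*(x*s))))) = 2 * κ 2 (fun _ => s)^2 * (τ x)^2 +
      κ 2 (fun _ => s)^2 * κ 2 ![x,x] := by
  have h := hκ 6 ![s,x,s,s,x,s]
  rw [show (List.ofFn ![s,x,s,s,x,s]).prod = s*(x*(s*(s*(x*s)))) by
    simp [List.ofFn_succ]] at h
  rw [← Finset.sum_subset
    (show ({{{0,2},{3,5},{1},{4}}, {{0,5},{2,3},{1,4}}, {{0,5},{2,3},{1},{4}}} :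
        Finset (Finset (Finset (Fin 6)))) ⊆ NCP 6 by
      intro P hP
      simp only [Finset.mem_insert, Finset.mem_singleton] at hP
      rcases hP with h | h | h <;> rw [h] <;>
        exact mem_NCP_of (by decide) (by unfold IsNonCrossing; decide))
    (by
      intro P hPN hPL
      by_contra hne
      simp only [Finset.mem_insert, Finset.mem_singleton] at hPL
      rcases class_sxssxs κ s x hfree hsc1 (mem_NCP.1 hPN).1 (mem_NCP.1 hPN).2 hne with
        h | h | h <;> exact hPL (by tauto))] at h
  rw [Finset.sum_insert (by decide), Finset.sum_insert (by decide),
      Finset.sum_singleton] at h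
  unfold cumulantPart at h
  rw [Finset.prod_insert (by decide), Finset.prod_insert (by decide),
      Finset.prod_insert (by decide), Finset.prod_singleton,
      Finset.prod_insert (by decide), Finset.prod_insert (by decide),
      Finset.prod_singleton,
      Finset.prod_insert (by decide), Finset.prod_insert (by decide),
      Finset.prod_insert (by decide), Finset.prod_singleton] at h
  rw [kappa_block κ (k := 2) ![s,x,s,s,x,s] {0,2} ![0,2]
        (by rw [Fin.strictMono_iff_lt_succ]; decide) (by decide) (fun _ => s)
        (by intro i; fin_cases i <;> rfl),
      kappa_block κ (k := 2) ![s,x,s,s,x,s] {3,5} ![3,5]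
        (by rw [Fin.strictMono_iff_lt_succ]; decide) (by decide) (fun _ => s)
        (by intro i; fin_cases i <;> rfl),
      kappa_block κ (k := 2) ![s,x,s,s,x,s] {0,5} ![0,5]
        (by rw [Fin.strictMono_iff_lt_succ]; decide) (by decide) (fun _ => s)
        (by intro i; fin_cases i <;> rfl),
      kappa_block κ (k := 2) ![s,x,s,s,x,s] {2,3} ![2,3]
        (by rw [Fin.strictMono_iff_lt_succ]; decide) (by decide) (fun _ => s)
        (by intro i; fin_cases i <;> rfl),
      kappa_block κ (k := 2) ![s,x,s,s,x,s] {1,4} ![1,4]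
        (by rw [Fin.strictMono_iff_lt_succ]; decide) (by decide) ![x,x]
        (by intro i; fin_cases i <;> rfl),
      kappa_block κ (k := 1) ![s,x,s,s,x,s] {1} ![1]
        (by rw [Fin.strictMono_iff_lt_succ]; decide) (by decide) ![x]
        (by intro i; fin_cases i <;> rfl),
      kappa_block κ (k := 1) ![s,x,s,s,x,s] {4} ![4]
        (by rw [Fin.strictMono_iff_lt_succ]; decide) (by decide) ![x]
        (by intro i; fin_cases i <;> rfl),
      kappa_one τ κ hκ] at h
  simp only [Matrix.cons_val_zero] at h
  linear_combination h

lemma mom_sbbs (hκ : MomentCumulant τ κ) (b : A) (hts : τ s = 0) (htb : τ b = 0) :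
    τ (s*(b*(b*s))) = κ 4 ![s,b,b,s] + κ 2 ![s,b] * κ 2 ![b,s] +
      κ 2 ![s,s] * κ 2 ![b,b] := by
  have h := hκ 4 ![s,b,b,s]
  rw [show (List.ofFn ![s,b,b,s]).prod = s*(b*(b*s)) by simp [List.ofFn_succ]] at h
  rw [← Finset.sum_subset
    (show ({{{0,1,2,3}}, {{0,1},{2,3}}, {{0,3},{1,2}}} :
        Finset (Finset (Finset (Fin 4)))) ⊆ NCP 4 by
      intro P hP
      simp only [Finset.mem_insert, Finset.mem_singleton] at hP
      rcases hP with h | h | h <;> rw [h] <;>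
        exact mem_NCP_of (by decide) (by unfold IsNonCrossing; decide))
    (by
      intro P hPN hPL
      simp only [Finset.mem_insert, Finset.mem_singleton] at hPL
      rcases class_nc4 (mem_NCP.1 hPN).1 (mem_NCP.1 hPN).2 with h | h | h | ⟨i, hi⟩
      · exact absurd (by tauto) hPL
      · exact absurd (by tauto) hPL
      · exact absurd (by tauto) hPL
      · refine Finset.prod_eq_zero hi ?_
        rw [kappa_block κ (k := 1) ![s,b,b,s] {i} ![i]
          (fun p q hpq => absurd hpq (by omega))
          (by rw [show (Finset.univ : Finset (Fin 1)) = {0} from rfl,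
                Finset.image_singleton]; rfl)
          ![(![s,b,b,s]) i] (by intro p; fin_cases p <;> rfl),
          kappa_one τ κ hκ]
        fin_cases i
        · exact hts
        · exact htb
        · exact htb
        · exact hts)] at h
  rw [Finset.sum_insert (by decide), Finset.sum_insert (by decide),
      Finset.sum_singleton] at h
  unfold cumulantPart at h
  rw [Finset.prod_singleton,
      Finset.prod_insert (by decide), Finset.prod_singleton,
      Finset.prod_insert (by decide), Finset.prod_singleton] at h
  rw [kappa_block κ (k := 4) ![s,b,b,s] {0,1,2,3} ![0,1,2,3]
        (by rw [Fin.strictMono_iff_lt_succ]; decide) (by decide) ![s,b,b,s]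
        (by intro i; fin_cases i <;> rfl),
      kappa_block κ (k := 2) ![s,b,b,s] {0,1} ![0,1]
        (by rw [Fin.strictMono_iff_lt_succ]; decide) (by decide) ![s,b]
        (by intro i; fin_cases i <;> rfl),
      kappa_block κ (k := 2) ![s,b,b,s] {2,3} ![2,3]
        (by rw [Fin.strictMono_iff_lt_succ]; decide) (by decide) ![b,s]
        (by intro i; fin_cases i <;> rfl),
      kappa_block κ (k := 2) ![s,b,b,s] {0,3} ![0,3]
        (by rw [Fin.strictMono_iff_lt_succ]; decide) (by decide) ![s,s]
        (by intro i; fin_cases i <;> rfl),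
      kappa_block κ (k := 2) ![s,b,b,s] {1,2} ![1,2]
        (by rw [Fin.strictMono_iff_lt_succ]; decide) (by decide) ![b,b]
        (by intro i; fin_cases i <;> rfl)] at h
  linear_combination h
end Moments2


/-- If moreover `x` is not a scalar multiple of the unit, then
`κ₄(s, i[s,x], i[s,x], s) = κ₂(s,s)² · κ₂(x,x) ≠ 0`; in particular the mixed free
cumulants of `s` and `i[s,x]` do not all vanish, so `s` and `i[s,x]` are not free. -/
theorem fourth_mixed_cumulant_ne_zero_not_free
    {A : Type*} [NormedRing A] [StarRing A] [CStarRing A] [NormedAlgebra ℂ A]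
    [StarModule ℂ A]
    (τ : A →ₗ[ℂ] ℂ) (hτ1 : τ 1 = 1)
    (hτpos : ∀ a : A, 0 ≤ τ (star a * a))
    (hτfaithful : ∀ a : A, τ (star a * a) = 0 → a = 0)
    (hτtracial : ∀ a b : A, τ (a * b) = τ (b * a))
    (κ : ∀ m : ℕ, (Fin m → A) → ℂ) (hκ : MomentCumulant τ κ)
    (s x : A) (hs : star s = s) (hx : star x = x)
    (hfree : FreePairOf κ s x) (hsc : IsSemicircular κ s)
    (hxnotscalar : ∀ z : ℂ, x ≠ z • (1 : A)) :
    κ 4 ![s, Complex.I • (s * x - x * s), Complex.I • (s * x - x * s), s] =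
        κ 2 ![s, s] ^ 2 * κ 2 ![x, x] ∧
      κ 2 ![s, s] ^ 2 * κ 2 ![x, x] ≠ 0 ∧
      ¬ FreePairOf κ s (Complex.I • (s * x - x * s)) := by
  obtain ⟨hsc1, hsc2⟩ := hsc
  set σ : ℂ := κ 2 (fun _ => s) with hσ
  set t : ℂ := τ x with ht
  set K : ℂ := κ 2 ![x, x] with hKdef
  set c : A := Complex.I • (s * x - x * s) with hc
  -- basic facts
  have hss : κ 2 ![s, s] = σ := by
    rw [hσ]; congr 1; funext i; fin_cases i <;> rfl
  have hts : τ s = 0 := by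
    have h := hsc1 1 (by decide)
    rwa [kappa_one τ κ hκ (fun _ => s)] at h
  have hK : K = τ (x * x) - t * t := by
    rw [hKdef, kappa_two τ κ hκ ![x, x]]
    simp
    rfl
  have hτss : τ (s * s) = σ := by
    have h := kappa_two τ κ hκ ![s, s]
    rw [hss] at h
    simp only [Matrix.cons_val_zero, Matrix.cons_val_one, Matrix.head_cons] at h
    rw [hts] at h
    linear_combination -h
  -- moments of c
  have htc : τ c = 0 := by
    rw [hc, map_smul, map_sub, hτtracial s x]
    simp
  have hsc' : τ (s * c) = 0 := by
    have hexp : s * c = Complex.I • (s * (s * x) - s * (x * s)) := by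
      rw [hc, mul_smul_comm, mul_sub]
    rw [hexp, map_smul, map_sub]
    have h1 : τ (s * (s * x)) = τ (s * (x * s)) := by
      rw [hτtracial s (s * x), mul_assoc]
    rw [h1]
    simp
  have hcs : τ (c * s) = 0 := by
    have hexp : c * s = Complex.I • ((s * x) * s - (x * s) * s) := by
      rw [hc, smul_mul_assoc, sub_mul]
    rw [hexp, map_smul, map_sub]
    have h1 : τ ((s * x) * s) = τ ((x * s) * s) := by
      rw [hτtracial (s * x) s, ← mul_assoc, mul_assoc x s s, hτtracial x (s * s)]
    rw [h1]
    simp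
  have hDD : c * c = (-1 : ℂ) • (((s*x)*(s*x) - (s*x)*(x*s)) - ((x*s)*(s*x) - (x*s)*(x*s))) := by
    rw [hc, smul_mul_smul_comm, Complex.I_mul_I, sub_mul, mul_sub, mul_sub]
  have hw1 : τ ((s*x)*(s*x)) = σ * (t * t) := by
    rw [mul_assoc, ← mom_sxsx τ κ s x hκ hfree hsc1]
  have hw2 : τ ((s*x)*(x*s)) = σ * K + σ * (t * t) := by
    have : (s*x)*(x*s) = (s*(x*x))*s := by
      simp only [mul_assoc]
    rw [this, hτtracial (s*(x*x)) s, ← mom_ssxx τ κ s x hκ hfree hsc1]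
  have hw3 : τ ((x*s)*(s*x)) = σ * K + σ * (t * t) := by
    rw [hτtracial (x*s) (s*x)]
    exact hw2
  have hw4 : τ ((x*s)*(x*s)) = σ * (t * t) := by
    rw [mul_assoc, hτtracial x (s*(x*s)), ← hw1]
    simp only [mul_assoc]
  have hcc : τ (c * c) = 2 * σ * K := by
    rw [hDD, map_smul]
    simp only [map_sub]
    rw [hw1, hw2, hw3, hw4]
    simp only [smul_eq_mul]
    ring
  -- the sixth moment
  have hsccs : τ (s * (c * (c * s))) = 3 * σ^2 * K := by
    have hexp : s * (c * (c * s)) =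
        (-1 : ℂ) • ((s*((s*x)*((s*x)*s)) - s*((s*x)*((x*s)*s))) -
          (s*((x*s)*((s*x)*s)) - s*((x*s)*((x*s)*s)))) := by
      rw [show c * (c * s) = (c * c) * s from (mul_assoc c c s).symm, hDD,
        smul_mul_assoc, mul_smul_comm]
      simp only [sub_mul, mul_sub, mul_assoc]
    rw [hexp, map_smul]
    simp only [map_sub]
    have m1 : τ (s*((s*x)*((s*x)*s))) = 2 * σ^2 * t^2 := by
      rw [show s*((s*x)*((s*x)*s)) = s * (s*(x*(s*(x*s)))) by simp only [mul_assoc],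
        hτtracial s (s*(x*(s*(x*s))))]
      rw [show (s*(x*(s*(x*s)))) * s = s*(x*(s*(x*(s*s)))) by simp only [mul_assoc]]
      rw [mom_sxsxss τ κ s x hκ hfree hsc1]
    have m2 : τ (s*((s*x)*((x*s)*s))) = 2 * σ^2 * K + 2 * σ^2 * t^2 := by
      rw [show s*((s*x)*((x*s)*s)) = s*(s*(x*(x*(s*s)))) by simp only [mul_assoc],
        mom_ssxxss τ κ s x hκ hfree hsc1]
    have m3 : τ (s*((x*s)*((s*x)*s))) = 2 * σ^2 * t^2 + σ^2 * K := by
      rw [show s*((x*s)*((s*x)*s)) = s*(x*(s*(s*(x*s)))) by simp only [mul_assoc],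
        mom_sxssxs τ κ s x hκ hfree hsc1]
    have m4 : τ (s*((x*s)*((x*s)*s))) = 2 * σ^2 * t^2 := by
      rw [show s*((x*s)*((x*s)*s)) = s*(x*(s*(x*(s*s)))) by simp only [mul_assoc],
        mom_sxsxss τ κ s x hκ hfree hsc1]
    rw [m1, m2, m3, m4]
    simp only [smul_eq_mul]
    ring
  -- the fourth cumulant
  have hmain : κ 4 ![s, c, c, s] = σ^2 * K := by
    have h := mom_sbbs τ κ s hκ c hts htc
    rw [hsccs, hss] at h
    rw [kappa_two τ κ hκ ![s, c], kappa_two τ κ hκ ![c, s], kappa_two τ κ hκ ![c, c]] at h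
    simp only [Matrix.cons_val_zero, Matrix.cons_val_one, Matrix.head_cons] at h
    rw [hsc', hcs, hcc, hts, htc] at h
    linear_combination -h
  -- K ≠ 0
  have htreal : t.im = 0 := by
    have h1 := hτpos x
    rw [hx] at h1
    have h2 := hτpos (x + 1)
    rw [show star (x + 1) = x + 1 by rw [star_add, hx, star_one]] at h2
    have hexp : (x + 1) * (x + 1) = x * x + x + x + 1 := by noncomm_ring
    rw [hexp, map_add, map_add, map_add, hτ1] at h2
    have i1 : (τ (x * x)).im = 0 := (Complex.le_def.1 h1).2.symm
    have i2 : (τ (x * x) + τ x + τ x + 1).im = 0 := (Complex.le_def.1 h2).2.symm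
    simp only [Complex.add_im, Complex.one_im, i1] at i2
    rw [ht]
    linarith
  have hKne : K ≠ 0 := by
    intro hK0
    set y : A := x - t • 1 with hy
    have hsy : star y = y := by
      rw [hy, star_sub, hx, star_smul, star_one, Complex.star_def,
        Complex.conj_eq_iff_im.2 htreal]
    have hyy : τ (star y * y) = K := by
      rw [hsy, hy]
      simp only [sub_mul, mul_sub, smul_mul_assoc, mul_smul_comm, smul_smul,
        one_mul, mul_one, map_sub, map_smul, hτ1, smul_eq_mul]
      rw [← ht]
      linear_combination -hK
    have hy0 : y = 0 := hτfaithful y (by rw [hyy, hK0])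
    have : x = t • 1 := by
      rw [hy] at hy0
      rw [← sub_eq_zero]
      exact hy0
    exact hxnotscalar t this
  have hσne : σ ≠ 0 := by
    intro h0
    rw [h0] at hsc2
    exact lt_irrefl 0 hsc2
  have hval : σ^2 * K ≠ 0 := mul_ne_zero (pow_ne_zero 2 hσne) hKne
  refine ⟨by rw [hmain, hss], by rw [hss]; exact hval, ?_⟩
  intro hF
  have h0 := hF 4 (by norm_num) ![s, c, c, s] ![true, false, false, true]
    (by
      intro j
      fin_cases j
      · exact StarAlgebra.subset_adjoin (R := ℂ) _ (Set.mem_singleton _)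
      · exact StarAlgebra.subset_adjoin (R := ℂ) _ (Set.mem_singleton _)
      · exact StarAlgebra.subset_adjoin (R := ℂ) _ (Set.mem_singleton _)
      · exact StarAlgebra.subset_adjoin (R := ℂ) _ (Set.mem_singleton _))
    ⟨0, rfl⟩ ⟨1, rfl⟩
  rw [hmain] at h0
  exact hval (by rw [← h0])
end

section
/- Let s, x ∈ A be free self-adjoint elements with s semicircular. Fix n ≥ 2, a subset B ⊆ {1,…,n} with |B| = k and 1 ≤ k ≤ n − 1, and a subset D ⊆ B. Define the word w₁,…,w_{n+k} ∈ A as follows: for j ∉ B, the unique element of ι_B(j) carries the letter s; for j ∈ B ∖ D, the two elements of ι_B(j) carry, in increasing order, the letters s then x; for j ∈ D, they carry x then s. Suppose π ∈ NC(n+k) satisfies π ∨ τ_B = 1_{n+k} (the join of π and τ_B in the lattice of partitions of {1,…,n+k} is the one-block partition) and κ_π[w₁,…,w_{n+k}] ≠ 0. Then: (i) every block of π consists of positions carrying the same letter (all s or all x), and every block whose positions carry the letter s has exactly two elements; (ii) whenever a position i ∈ ι_B(j₀) with j₀ ∉ B lies in a block {i, l} of π, then l is a position of an element of B (l ∈ ι_B(j₁)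 for some j₁ ∈ B), w_l = s, and i and l are cyclically consecutive in {1,…,n+k}, i.e. |i − l| = 1 or {i, l} = {1, n+k}. -/
open scoped BigOperators ComplexOrder

attribute [local instance] Classical.propDecidable

/-- Structure of partitions contributing to the expansion of `κ_n` of `s + i[s,x]`.
The doubling map `ι_B` is presented by two functions `lo hi : Fin n → Fin (n+k)`
with `ι_B(j) = {lo j, hi j}`: a pair of consecutive positions if `j ∈ B` and a
singleton (`hi j = lo j`) otherwise; these sets are order-compatible and cover
`Fin (n+k)`, and `τ_B` is the interval partition with blocks `ι_B(j)`. The word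
`w` carries the letter `s` on `ι_B(j)` for `j ∉ B`, the letters `s, x` (in
increasing position order) on `ι_B(j)` for `j ∈ B \ D`, and `x, s` for `j ∈ D`.
If `π ∈ NC(n+k)` satisfies `π ∨ τ_B = 1_{n+k}` (every two points are connected by
the relation generated by the blocks of `π` and of `τ_B`) and `κ_π[w] ≠ 0`, then:
(i) every block of `π` carries a single letter, and every block carrying `s` is a
pair; (ii) a singleton position `lo j₀` (with `j₀ ∉ B`) is paired by `π` only with
a position `l` belonging to some `ι_B(j₁)` with `j₁ ∈ B`, carrying the letter `s`,
and cyclically consecutive to `lo j₀` in `{1, …, n+k}`. -/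
theorem contributing_partition_structure
    {A : Type*} [NormedRing A] [StarRing A] [CStarRing A] [NormedAlgebra ℂ A]
    [StarModule ℂ A]
    (τ : A →ₗ[ℂ] ℂ) (hτ1 : τ 1 = 1)
    (hτpos : ∀ a : A, 0 ≤ τ (star a * a))
    (hτfaithful : ∀ a : A, τ (star a * a) = 0 → a = 0)
    (hτtracial : ∀ a b : A, τ (a * b) = τ (b * a))
    (κ : ∀ m : ℕ, (Fin m → A) → ℂ) (hκ : MomentCumulant τ κ)
    (s x : A) (hs : star s = s) (hx : star x = x)
    (hfree : FreePairOf κ s x) (hsc : IsSemicircular κ s)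
    (n k : ℕ) (hn : 2 ≤ n)
    (B : Finset (Fin n)) (hBcard : B.card = k) (hk1 : 1 ≤ k) (hkn : k ≤ n - 1)
    (D : Finset (Fin n)) (hDB : D ⊆ B)
    (lo hi : Fin n → Fin (n + k))
    (hpair : ∀ j ∈ B, (hi j : ℕ) = (lo j : ℕ) + 1)
    (hsingle : ∀ j ∉ B, hi j = lo j)
    (hord : ∀ j j' : Fin n, j < j' → hi j < lo j')
    (hcover : ∀ p : Fin (n + k), ∃ j : Fin n, p = lo j ∨ p = hi j)
    (w : Fin (n + k) → A)
    (hw_single : ∀ j ∉ B, w (lo j) = s)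
    (hw_bd : ∀ j ∈ B, j ∉ D → w (lo j) = s ∧ w (hi j) = x)
    (hw_d : ∀ j ∈ D, w (lo j) = x ∧ w (hi j) = s)
    (P : Finset (Finset (Fin (n + k)))) (hPpart : IsPartition P)
    (hPnc : IsNonCrossing P)
    (hjoin : ∀ p q : Fin (n + k),
      Relation.ReflTransGen
        (fun a b => (∃ V ∈ P, a ∈ V ∧ b ∈ V) ∨
          ∃ j : Fin n, (a = lo j ∨ a = hi j) ∧ (b = lo j ∨ b = hi j)) p q)
    (hκπ : cumulantPart κ P w ≠ 0) :
    ((∀ V ∈ P, ∀ p ∈ V, ∀ q ∈ V, w p = w q) ∧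
        (∀ V ∈ P, (∃ p ∈ V, w p = s) → V.card = 2)) ∧
      ∀ j₀ : Fin n, j₀ ∉ B → ∀ V ∈ P, lo j₀ ∈ V → ∀ l ∈ V, l ≠ lo j₀ →
        (∃ j₁ ∈ B, l = lo j₁ ∨ l = hi j₁) ∧ w l = s ∧
          ((l : ℕ) = (lo j₀ : ℕ) + 1 ∨ (lo j₀ : ℕ) = (l : ℕ) + 1 ∨
            ((lo j₀ : ℕ) = 0 ∧ (l : ℕ) = n + k - 1) ∨
            ((l : ℕ) = 0 ∧ (lo j₀ : ℕ) = n + k - 1)) := by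
  classical
  -- every letter is s or x
  have hws : ∀ p, w p = s ∨ w p = x := by
    intro p
    obtain ⟨j, hp⟩ := hcover p
    by_cases hjB : j ∈ B
    · by_cases hjD : j ∈ D
      · obtain ⟨h1, h2⟩ := hw_d j hjD
        rcases hp with hp | hp <;> subst hp
        · exact Or.inr h1
        · exact Or.inl h2
      · obtain ⟨h1, h2⟩ := hw_bd j hjB hjD
        rcases hp with hp | hp <;> subst hp
        · exact Or.inl h1
        · exact Or.inr h2
    · rcases hp with hp | hp <;> subst hp
      · exact Or.inl (hw_single j hjB)
      · rw [hsingle j hjB]; exact Or.inl (hw_single j hjB)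
  have hfac : ∀ V ∈ P, κ V.card (fun i => w (V.orderEmbOfFin rfl i)) ≠ 0 := by
    intro V hV h0
    apply hκπ
    unfold cumulantPart
    exact Finset.prod_eq_zero hV h0
  have hidx : ∀ (V : Finset (Fin (n + k))), ∀ p ∈ V,
      ∃ ip : Fin V.card, V.orderEmbOfFin rfl ip = p := by
    intro V p hp
    have : p ∈ Set.range (V.orderEmbOfFin rfl) := by
      rw [Finset.range_orderEmbOfFin]
      exact hp
    exact this
  have hsame : ∀ V ∈ P, ∀ p ∈ V, ∀ q ∈ V, w p = w q := by
    intro V hV p hp q hq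
    by_contra hne
    apply hfac V hV
    have hpq : p ≠ q := fun h => hne (by rw [h])
    have hm2 : 2 ≤ V.card := Finset.one_lt_card.mpr ⟨p, hp, q, hq, hpq⟩
    have hsnex : s ≠ x := by
      intro h
      apply hne
      rcases hws p with h1 | h1 <;> rcases hws q with h2 | h2 <;> rw [h1, h2] <;> simp [h]
    have key : ∀ us ∈ V, w us = s → ∀ ux ∈ V, w ux = x →
        κ V.card (fun i => w (V.orderEmbOfFin rfl i)) = 0 := by
      intro us hus hwus ux hux hwux
      refine hfree V.card hm2 _
        (fun i => if w (V.orderEmbOfFin rfl i) = s then true else false) ?_ ?_ ?_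
      · intro i
        by_cases h : w (V.orderEmbOfFin rfl i) = s
        · simp only [if_pos h, cond_true, h]
          exact StarAlgebra.self_mem_adjoin_singleton ℂ s
        · have h' : w (V.orderEmbOfFin rfl i) = x := (hws _).resolve_left h
          have hb : (if w (V.orderEmbOfFin rfl i) = s then true else false) = false :=
            if_neg h
          simp only [hb, cond_false]
          rw [h']
          exact StarAlgebra.self_mem_adjoin_singleton ℂ x
      · obtain ⟨iu, hiu⟩ := hidx V us hus
        have hh : w (V.orderEmbOfFin rfl iu) = s := by rw [hiu]; exact hwus
        exact ⟨iu, by simp [hh]⟩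
      · obtain ⟨ix, hix⟩ := hidx V ux hux
        have hh : w (V.orderEmbOfFin rfl ix) = x := by rw [hix]; exact hwux
        exact ⟨ix, by simp [hh, Ne.symm hsnex]⟩
    rcases hws p with h1 | h1 <;> rcases hws q with h2 | h2
    · exact absurd (h1.trans h2.symm) hne
    · exact key p hp h1 q hq h2
    · exact key q hq h2 p hp h1
    · exact absurd (h1.trans h2.symm) hne
  have hpair2 : ∀ V ∈ P, (∃ p ∈ V, w p = s) → V.card = 2 := by
    rintro V hV ⟨p, hp, hwp⟩
    by_contra h2
    apply hfac V hV
    have heq : (fun i => w (V.orderEmbOfFin rfl i)) = fun _ => s := by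
      funext i
      have hmem : V.orderEmbOfFin rfl i ∈ V := Finset.orderEmbOfFin_mem V rfl i
      rw [hsame V hV _ hmem p hp, hwp]
    rw [heq]
    exact hsc.1 V.card h2
  refine ⟨⟨hsame, hpair2⟩, ?_⟩
  -- helper facts about the doubling map
  have hleNat : ∀ j : Fin n, (lo j : ℕ) ≤ (hi j : ℕ) := by
    intro j
    by_cases hj : j ∈ B
    · rw [hpair j hj]; omega
    · rw [hsingle j hj]
  have hdisj : ∀ (j j' : Fin n) (p : Fin (n + k)),
      (p = lo j ∨ p = hi j) → (p = lo j' ∨ p = hi j') → j = j' := by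
    intro j j' p h1 h2
    by_contra hne
    have hA : (lo j : ℕ) ≤ (p : ℕ) ∧ (p : ℕ) ≤ (hi j : ℕ) := by
      have := hleNat j
      rcases h1 with h | h <;> subst h <;> omega
    have hB2 : (lo j' : ℕ) ≤ (p : ℕ) ∧ (p : ℕ) ≤ (hi j' : ℕ) := by
      have := hleNat j'
      rcases h2 with h | h <;> subst h <;> omega
    rcases lt_or_gt_of_ne hne with h | h
    · have := hord j j' h
      rw [Fin.lt_def] at this
      omega
    · have := hord j' j h
      rw [Fin.lt_def] at this
      omega
  have hNge : 3 ≤ n + k := by omega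
  intro j₀ hj₀ V hV hiV l hlV hli
  have hwi : w (lo j₀) = s := hw_single j₀ hj₀
  have hwl : w l = s := by rw [hsame V hV l hlV (lo j₀) hiV, hwi]
  have hcard : V.card = 2 := hpair2 V hV ⟨lo j₀, hiV, hwi⟩
  have hVsub : ({lo j₀, l} : Finset (Fin (n + k))) ⊆ V := by
    intro p hp
    rcases Finset.mem_insert.mp hp with h | h
    · subst h; exact hiV
    · rw [Finset.mem_singleton] at h; subst h; exact hlV
  have hVeq : V = {lo j₀, l} := by
    refine (Finset.eq_of_subset_of_card_le hVsub ?_).symm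
    rw [hcard, Finset.card_pair (Ne.symm hli)]
  have memab0 : ∀ p ∈ V, p = lo j₀ ∨ p = l := by
    intro p hp
    rw [hVeq] at hp
    simpa using hp
  obtain ⟨j₁, hl⟩ := hcover l
  have main : ∀ a b : Fin (n + k), a < b →
      (lo j₀ = a ∧ l = b) ∨ (lo j₀ = b ∧ l = a) →
      j₁ ∈ B ∧ ((b : ℕ) = (a : ℕ) + 1 ∨ ((a : ℕ) = 0 ∧ (b : ℕ) = n + k - 1)) := by
    intro a b hab hcase
    have habN : (a : ℕ) < (b : ℕ) := Fin.lt_def.mp hab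
    have haV : a ∈ V := by
      rcases hcase with ⟨h1, h2⟩ | ⟨h1, h2⟩
      · exact h1 ▸ hiV
      · exact h2 ▸ hlV
    have hbV : b ∈ V := by
      rcases hcase with ⟨h1, h2⟩ | ⟨h1, h2⟩
      · exact h2 ▸ hlV
      · exact h1 ▸ hiV
    have memab : ∀ p ∈ V, p = a ∨ p = b := by
      intro p hp
      rcases memab0 p hp with h | h <;> rcases hcase with ⟨h1, h2⟩ | ⟨h1, h2⟩ <;>
        subst h <;> tauto
    have hlval : l = a ∨ l = b := by
      rcases hcase with ⟨h1, h2⟩ | ⟨h1, h2⟩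
      · exact Or.inr h2
      · exact Or.inl h2
    have insideClosed :
        (∀ c : Fin (n + k), (c = lo j₁ ∨ c = hi j₁) → ¬((a : ℕ) < (c : ℕ) ∧ (c : ℕ) < (b : ℕ))) →
        ∀ p : Fin (n + k), (a : ℕ) < (p : ℕ) → (p : ℕ) < (b : ℕ) →
        ∀ q, Relation.ReflTransGen
          (fun u v => (∃ W ∈ P, u ∈ W ∧ v ∈ W) ∨
            ∃ j : Fin n, (u = lo j ∨ u = hi j) ∧ (v = lo j ∨ v = hi j)) p q →
        (a : ℕ) < (q : ℕ) ∧ (q : ℕ) < (b : ℕ) := by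
      intro hbr p hap hpb q hq
      induction hq with
      | refl => exact ⟨hap, hpb⟩
      | @tail c q h1 hstep IH =>
        obtain ⟨hac, hcb⟩ := IH
        rcases hstep with ⟨W, hW, hcW, hqW⟩ | ⟨j, hcj, hqj⟩
        · have hcV : c ∉ V := by
            intro hcV
            rcases memab c hcV with h | h <;> subst h <;> omega
          rcases Nat.lt_trichotomy (q : ℕ) (a : ℕ) with hqa | hqa | hqa
          · have hWV : W = V := hPnc W hW V hV q c hqW hcW a b haV hbV
              (Fin.lt_def.mpr hqa) (Fin.lt_def.mpr hac) (Fin.lt_def.mpr hcb)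
            exact absurd (by rw [← hWV]; exact hcW) hcV
          · have hqa' : q = a := Fin.val_injective hqa
            have hWV : W = V := (hPpart.2 a).unique ⟨hW, hqa' ▸ hqW⟩ ⟨hV, haV⟩
            exact absurd (by rw [← hWV]; exact hcW) hcV
          · rcases Nat.lt_trichotomy (q : ℕ) (b : ℕ) with hqb | hqb | hqb
            · exact ⟨hqa, hqb⟩
            · have hqb' : q = b := Fin.val_injective hqb
              have hWV : W = V := (hPpart.2 b).unique ⟨hW, hqb' ▸ hqW⟩ ⟨hV, hbV⟩
              exact absurd (by rw [← hWV]; exact hcW) hcV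
            · have hVW : V = W := hPnc V hV W hW a b haV hbV c q hcW hqW
                (Fin.lt_def.mpr hac) (Fin.lt_def.mpr hcb) (Fin.lt_def.mpr hqb)
              exact absurd (by rw [hVW]; exact hcW) hcV
        · by_cases hcq : c = q
          · subst hcq; exact ⟨hac, hcb⟩
          · have hjB2 : j ∈ B := by
              by_contra hjB2
              have hs' : hi j = lo j := hsingle j hjB2
              apply hcq
              rcases hcj with h | h <;> rcases hqj with h' | h' <;> rw [h, h'] <;> simp [hs']
            have hadj : (q : ℕ) = (c : ℕ) + 1 ∨ (c : ℕ) = (q : ℕ) + 1 := by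
              have hp' := hpair j hjB2
              rcases hcj with h | h <;> rcases hqj with h' | h' <;> subst h <;> subst h' <;>
                first | exact absurd rfl hcq | omega
            rcases Nat.lt_trichotomy (q : ℕ) (a : ℕ) with hqa | hqa | hqa
            · omega
            · have hqa' : q = a := Fin.val_injective hqa
              rcases hcase with ⟨h1, h2⟩ | ⟨h1, h2⟩
              · have hj' : j = j₀ := hdisj j j₀ q hqj (Or.inl (hqa'.trans h1.symm))
                exact absurd (hj' ▸ hjB2) hj₀
              · have hj' : j = j₁ := hdisj j j₁ q hqj (by rw [hqa'.trans h2.symm]; exact hl)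
                exact absurd ⟨hac, hcb⟩ (hbr c (hj' ▸ hcj))
            · rcases Nat.lt_trichotomy (q : ℕ) (b : ℕ) with hqb | hqb | hqb
              · exact ⟨hqa, hqb⟩
              · have hqb' : q = b := Fin.val_injective hqb
                rcases hcase with ⟨h1, h2⟩ | ⟨h1, h2⟩
                · have hj' : j = j₁ := hdisj j j₁ q hqj (by rw [hqb'.trans h2.symm]; exact hl)
                  exact absurd ⟨hac, hcb⟩ (hbr c (hj' ▸ hcj))
                · have hj' : j = j₀ := hdisj j j₀ q hqj (Or.inl (hqb'.trans h1.symm))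
                  exact absurd (hj' ▸ hjB2) hj₀
              · omega
    have outsideClosed :
        (∀ c : Fin (n + k), (c = lo j₁ ∨ c = hi j₁) → ¬((c : ℕ) < (a : ℕ) ∨ (b : ℕ) < (c : ℕ))) →
        ∀ p : Fin (n + k), ((p : ℕ) < (a : ℕ) ∨ (b : ℕ) < (p : ℕ)) →
        ∀ q, Relation.ReflTransGen
          (fun u v => (∃ W ∈ P, u ∈ W ∧ v ∈ W) ∨
            ∃ j : Fin n, (u = lo j ∨ u = hi j) ∧ (v = lo j ∨ v = hi j)) p q →
        ((q : ℕ) < (a : ℕ) ∨ (b : ℕ) < (q : ℕ)) := by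
      intro hbr p hp q hq
      induction hq with
      | refl => exact hp
      | @tail c q h1 hstep IH =>
        rcases hstep with ⟨W, hW, hcW, hqW⟩ | ⟨j, hcj, hqj⟩
        · have hcV : c ∉ V := by
            intro hcV
            rcases memab c hcV with h | h <;> subst h <;> rcases IH with h' | h' <;> omega
          rcases Nat.lt_trichotomy (q : ℕ) (a : ℕ) with hqa | hqa | hqa
          · exact Or.inl hqa
          · have hqa' : q = a := Fin.val_injective hqa
            have hWV : W = V := (hPpart.2 a).unique ⟨hW, hqa' ▸ hqW⟩ ⟨hV, haV⟩
            exact absurd (by rw [← hWV]; exact hcW) hcV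
          · rcases Nat.lt_trichotomy (q : ℕ) (b : ℕ) with hqb | hqb | hqb
            · rcases IH with hc | hc
              · have hWV : W = V := hPnc W hW V hV c q hcW hqW a b haV hbV
                  (Fin.lt_def.mpr hc) (Fin.lt_def.mpr hqa) (Fin.lt_def.mpr hqb)
                exact absurd (by rw [← hWV]; exact hcW) hcV
              · have hVW : V = W := hPnc V hV W hW a b haV hbV q c hqW hcW
                  (Fin.lt_def.mpr hqa) (Fin.lt_def.mpr hqb) (Fin.lt_def.mpr hc)
                exact absurd (by rw [hVW]; exact hcW) hcV
            · have hqb' : q = b := Fin.val_injective hqb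
              have hWV : W = V := (hPpart.2 b).unique ⟨hW, hqb' ▸ hqW⟩ ⟨hV, hbV⟩
              exact absurd (by rw [← hWV]; exact hcW) hcV
            · exact Or.inr hqb
        · by_cases hcq : c = q
          · subst hcq; exact IH
          · have hjB2 : j ∈ B := by
              by_contra hjB2
              have hs' : hi j = lo j := hsingle j hjB2
              apply hcq
              rcases hcj with h | h <;> rcases hqj with h' | h' <;> rw [h, h'] <;> simp [hs']
            have hadj : (q : ℕ) = (c : ℕ) + 1 ∨ (c : ℕ) = (q : ℕ) + 1 := by
              have hp' := hpair j hjB2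
              rcases hcj with h | h <;> rcases hqj with h' | h' <;> subst h <;> subst h' <;>
                first | exact absurd rfl hcq | omega
            rcases Nat.lt_trichotomy (q : ℕ) (a : ℕ) with hqa | hqa | hqa
            · exact Or.inl hqa
            · have hqa' : q = a := Fin.val_injective hqa
              rcases hcase with ⟨h1, h2⟩ | ⟨h1, h2⟩
              · have hj' : j = j₀ := hdisj j j₀ q hqj (Or.inl (hqa'.trans h1.symm))
                exact absurd (hj' ▸ hjB2) hj₀
              · have hj' : j = j₁ := hdisj j j₁ q hqj (by rw [hqa'.trans h2.symm]; exact hl)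
                exact absurd IH (hbr c (hj' ▸ hcj))
            · rcases Nat.lt_trichotomy (q : ℕ) (b : ℕ) with hqb | hqb | hqb
              · rcases IH with h' | h' <;> omega
              · have hqb' : q = b := Fin.val_injective hqb
                rcases hcase with ⟨h1, h2⟩ | ⟨h1, h2⟩
                · have hj' : j = j₁ := hdisj j j₁ q hqj (by rw [hqb'.trans h2.symm]; exact hl)
                  exact absurd IH (hbr c (hj' ▸ hcj))
                · have hj' : j = j₀ := hdisj j j₀ q hqj (Or.inl (hqb'.trans h1.symm))
                  exact absurd (hj' ▸ hjB2) hj₀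
              · exact Or.inr hqb
    have hIB : j₁ ∈ B := by
      by_contra hj₁B
      have hll : hi j₁ = lo j₁ := hsingle j₁ hj₁B
      have hlo1 : lo j₁ = l := by
        rcases hl with h | h
        · exact h.symm
        · rw [← hll, h]
      have hcl : ∀ c : Fin (n + k), (c = lo j₁ ∨ c = hi j₁) → c = l := by
        intro c hc
        rcases hc with h | h
        · rw [h, hlo1]
        · rw [h, hll, hlo1]
      have hbr1 : ∀ c : Fin (n + k), (c = lo j₁ ∨ c = hi j₁) →
          ¬((a : ℕ) < (c : ℕ) ∧ (c : ℕ) < (b : ℕ)) := by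
        intro c hc
        rw [hcl c hc]
        rcases hlval with h | h <;> rw [h] <;> omega
      have hbr2 : ∀ c : Fin (n + k), (c = lo j₁ ∨ c = hi j₁) →
          ¬((c : ℕ) < (a : ℕ) ∨ (b : ℕ) < (c : ℕ)) := by
        intro c hc
        rw [hcl c hc]
        rcases hlval with h | h <;> rw [h] <;> omega
      have hEmptyIn : ∀ p : Fin (n + k), ¬((a : ℕ) < (p : ℕ) ∧ (p : ℕ) < (b : ℕ)) := by
        intro p hp
        have := insideClosed hbr1 p hp.1 hp.2 (lo j₀) (hjoin p (lo j₀))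
        rcases hcase with ⟨h1, _⟩ | ⟨h1, _⟩ <;> rw [h1] at this <;> omega
      have hEmptyOut : ∀ p : Fin (n + k), ¬((p : ℕ) < (a : ℕ) ∨ (b : ℕ) < (p : ℕ)) := by
        intro p hp
        have := outsideClosed hbr2 p hp (lo j₀) (hjoin p (lo j₀))
        rcases hcase with ⟨h1, _⟩ | ⟨h1, _⟩ <;> rw [h1] at this <;> omega
      have hsub : (Finset.univ : Finset (Fin (n + k))) ⊆ {a, b} := by
        intro p _
        simp only [Finset.mem_insert, Finset.mem_singleton]
        by_contra hpab
        push_neg at hpab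
        have h1 : (p : ℕ) ≠ (a : ℕ) := fun h => hpab.1 (Fin.val_injective h)
        have h2 : (p : ℕ) ≠ (b : ℕ) := fun h => hpab.2 (Fin.val_injective h)
        have h3 := hEmptyIn p
        have h4 := hEmptyOut p
        omega
      have hcardle := Finset.card_le_card hsub
      have hcard2 : ({a, b} : Finset (Fin (n + k))).card ≤ 2 := by
        refine le_trans (Finset.card_insert_le a {b}) ?_
        simp
      rw [Finset.card_univ, Fintype.card_fin] at hcardle
      omega
    refine ⟨hIB, ?_⟩
    by_contra hkey
    push_neg at hkey
    obtain ⟨hkey1, hkey2⟩ := hkey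
    have hbn : (b : ℕ) < n + k := b.isLt
    -- inside witness
    have hin : ∃ c : Fin (n + k), (a : ℕ) < (c : ℕ) ∧ (c : ℕ) < (b : ℕ) := by
      refine ⟨⟨(a : ℕ) + 1, by omega⟩, ?_, ?_⟩
      · show (a : ℕ) < (a : ℕ) + 1; omega
      · show (a : ℕ) + 1 < (b : ℕ); omega
    have hout : ∃ c : Fin (n + k), (c : ℕ) < (a : ℕ) ∨ (b : ℕ) < (c : ℕ) := by
      by_cases ha0 : (a : ℕ) = 0
      · refine ⟨⟨n + k - 1, by omega⟩, Or.inr ?_⟩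
        have := hkey2 ha0
        show (b : ℕ) < n + k - 1
        omega
      · refine ⟨⟨0, by omega⟩, Or.inl ?_⟩
        show 0 < (a : ℕ)
        omega
    obtain ⟨u, huj, hul⟩ : ∃ u : Fin (n + k), (u = lo j₁ ∨ u = hi j₁) ∧
        ∀ c : Fin (n + k), (c = lo j₁ ∨ c = hi j₁) → c = l ∨ c = u := by
      rcases hl with h | h
      · exact ⟨hi j₁, Or.inr rfl, fun c hc => by
          rcases hc with h' | h'
          · exact Or.inl (h'.trans h.symm)
          · exact Or.inr h'⟩
      · exact ⟨lo j₁, Or.inl rfl, fun c hc => by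
          rcases hc with h' | h'
          · exact Or.inr h'
          · exact Or.inl (h'.trans h.symm)⟩
    by_cases hu_in : (a : ℕ) < (u : ℕ) ∧ (u : ℕ) < (b : ℕ)
    · have hbr2 : ∀ c : Fin (n + k), (c = lo j₁ ∨ c = hi j₁) →
          ¬((c : ℕ) < (a : ℕ) ∨ (b : ℕ) < (c : ℕ)) := by
        intro c hc
        rcases hul c hc with h | h <;> rw [h]
        · rcases hlval with h' | h' <;> rw [h'] <;> omega
        · omega
      obtain ⟨c₂, hc₂⟩ := hout
      have := outsideClosed hbr2 c₂ hc₂ (lo j₀) (hjoin c₂ (lo j₀))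
      rcases hcase with ⟨h1, _⟩ | ⟨h1, _⟩ <;> rw [h1] at this <;> omega
    · have hbr1 : ∀ c : Fin (n + k), (c = lo j₁ ∨ c = hi j₁) →
          ¬((a : ℕ) < (c : ℕ) ∧ (c : ℕ) < (b : ℕ)) := by
        intro c hc
        rcases hul c hc with h | h <;> rw [h]
        · rcases hlval with h' | h' <;> rw [h'] <;> omega
        · exact hu_in
      obtain ⟨c₁, hc₁1, hc₁2⟩ := hin
      have := insideClosed hbr1 c₁ hc₁1 hc₁2 (lo j₀) (hjoin c₁ (lo j₀))
      rcases hcase with ⟨h1, _⟩ | ⟨h1, _⟩ <;> rw [h1] at this <;> omega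
  rcases lt_or_gt_of_ne (Ne.symm hli) with hlt | hlt
  · obtain ⟨hIB, hkey⟩ := main (lo j₀) l hlt (Or.inl ⟨rfl, rfl⟩)
    exact ⟨⟨j₁, hIB, hl⟩, hwl, by omega⟩
  · obtain ⟨hIB, hkey⟩ := main l (lo j₀) hlt (Or.inr ⟨rfl, rfl⟩)
    exact ⟨⟨j₁, hIB, hl⟩, hwl, by omega⟩
end
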